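/- arXiv:1701.06089 — 10 statements merged into one kernel-verified Lean document; each statement's English description precedes it below -/
import Mathlib

section
/- Let V be a finite-dimensional F-vector space of dimension d+1 with d ≥ 1, and let A, A* be a Leonard pair on V of q-Racah type. Then there is at most one F-linear map E : V → V such that each of the three operators A + (q A* E − q^{-1} E A*)/(q^2 − q^{-2}), A* + (q E A − q^{-1} A E)/(q^2 − q^{-2}), and E + (q A A* − q^{-1} A* A)/(q^2 − q^{-2}) is a scalar multiple of the identity; that is, if E and E' both have this property then E = E'. -/
/-- The universal DAHA-module data: four invertible operators `t i` with inverses `s i`,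
`t i + s i` central among the `t j`, and `t 0 t 1 t 2 t 3 = q⁻¹`. -/
structure HqMod (F : Type*) [Field F] (q : F) (V : Type*) [AddCommGroup V] [Module F V] where
  t : Fin 4 → Module.End F V
  s : Fin 4 → Module.End F V
  ts : ∀ i, t i * s i = 1
  st : ∀ i, s i * t i = 1
  central : ∀ i j, Commute (t i + s i) (t j)
  prodEq : t 0 * t 1 * t 2 * t 3 = q⁻¹ • (1 : Module.End F V)

namespace HqMod

variable {F : Type*} [Field F] {q : F} {V : Type*} [AddCommGroup V] [Module F V]

/-- `X = t 3 * t 0`. -/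
def X (M : HqMod F q V) : Module.End F V := M.t 3 * M.t 0

/-- `X⁻¹ = t 0 ⁻¹ * t 3 ⁻¹`. -/
def Xinv (M : HqMod F q V) : Module.End F V := M.s 0 * M.s 3

/-- `Y = t 0 * t 1`. -/
def Y (M : HqMod F q V) : Module.End F V := M.t 0 * M.t 1

/-- `Y⁻¹ = t 1 ⁻¹ * t 0 ⁻¹`. -/
def Yinv (M : HqMod F q V) : Module.End F V := M.s 1 * M.s 0

/-- `G₀ = t 0 - t 3 * t 0 * t 3⁻¹`. -/
def G0 (M : HqMod F q V) : Module.End F V := M.t 0 - M.t 3 * M.t 0 * M.s 3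

/-- `G₂ = t 2 - t 1 * t 2 * t 1⁻¹`. -/
def G2 (M : HqMod F q V) : Module.End F V := M.t 2 - M.t 1 * M.t 2 * M.s 1

/-- `A = Y + Y⁻¹`. -/
def A (M : HqMod F q V) : Module.End F V := M.Y + M.Yinv

/-- `B = X + X⁻¹`. -/
def B (M : HqMod F q V) : Module.End F V := M.X + M.Xinv

/-- Irreducibility: `V ≠ 0` and the only subspaces invariant under all `t i` are `⊥` and `⊤`. -/
def Irreducible (M : HqMod F q V) : Prop :=
  Nontrivial V ∧ ∀ W : Submodule F V, (∀ i, ∀ v ∈ W, M.t i v ∈ W) → W = ⊥ ∨ W = ⊤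

/-- `(k 0, k 1, k 2, k 3)` is a parameter sequence: each `k i ≠ 0` and
`t i + t i⁻¹ = (k i + k i⁻¹) • 1`. -/
def IsParamSeq (M : HqMod F q V) (k : Fin 4 → F) : Prop :=
  ∀ i, k i ≠ 0 ∧ M.t i + M.s i = (k i + (k i)⁻¹) • (1 : Module.End F V)

end HqMod

/-- An endomorphism is diagonalizable when its eigenspaces span. -/
def Diagonalizable {F : Type*} [Field F] {V : Type*} [AddCommGroup V] [Module F V]
    (f : Module.End F V) : Prop :=
  (⨆ μ : F, Module.End.eigenspace f μ) = ⊤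

/-- A square matrix is tridiagonal. -/
def IsTridiagonal {F : Type*} [Field F] {n : ℕ} (M : Matrix (Fin n) (Fin n) F) : Prop :=
  ∀ i j : Fin n, 1 < ((i : ℤ) - (j : ℤ)).natAbs → M i j = 0

/-- A square matrix is irreducible tridiagonal: tridiagonal with nonzero sub- and
superdiagonal entries. -/
def IsIrredTridiagonal {F : Type*} [Field F] {n : ℕ} (M : Matrix (Fin n) (Fin n) F) : Prop :=
  IsTridiagonal M ∧ (∀ i j : Fin n, (i : ℤ) - (j : ℤ) = 1 → M i j ≠ 0) ∧
    (∀ i j : Fin n, (j : ℤ) - (i : ℤ) = 1 → M i j ≠ 0)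

/-- A Leonard pair on `V`. -/
def IsLeonardPair {F : Type*} [Field F] {V : Type*} [AddCommGroup V] [Module F V]
    (A As : Module.End F V) : Prop :=
  0 < Module.finrank F V ∧
  (∃ b : Module.Basis (Fin (Module.finrank F V)) F V,
    IsIrredTridiagonal (LinearMap.toMatrix b b A) ∧ (LinearMap.toMatrix b b As).IsDiag) ∧
  (∃ b : Module.Basis (Fin (Module.finrank F V)) F V,
    IsIrredTridiagonal (LinearMap.toMatrix b b As) ∧ (LinearMap.toMatrix b b A).IsDiag)

/-- `θ_r = a q^{2r-d} + a⁻¹ q^{d-2r}`. -/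
noncomputable def thetaSeq {F : Type*} [Field F] (q a : F) (d r : ℕ) : F :=
  a * q ^ (2 * (r : ℤ) - (d : ℤ)) + a⁻¹ * q ^ ((d : ℤ) - 2 * (r : ℤ))

/-- The first split sequence `φ_r` attached to `(a,b,c,d)`. -/
noncomputable def phiSeq {F : Type*} [Field F] (q a b c : F) (d r : ℕ) : F :=
  a⁻¹ * b⁻¹ * q ^ ((d : ℤ) + 1) * (q ^ (r : ℤ) - q ^ (-(r : ℤ)))
    * (q ^ ((r : ℤ) - (d : ℤ) - 1) - q ^ ((d : ℤ) - (r : ℤ) + 1))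
    * (q ^ (-(r : ℤ)) - a * b * c * q ^ ((r : ℤ) - (d : ℤ) - 1))
    * (q ^ (-(r : ℤ)) - a * b * c⁻¹ * q ^ ((r : ℤ) - (d : ℤ) - 1))

/-- `(a,b,c,d)` is a Huang data of the pair `(A, As)`. -/
def IsHuangData {F : Type*} [Field F] {V : Type*} [AddCommGroup V] [Module F V]
    (q : F) (A As : Module.End F V) (a b c : F) (d : ℕ) : Prop :=
  a ≠ 0 ∧ b ≠ 0 ∧ c ≠ 0 ∧ Module.finrank F V = d + 1 ∧
  (∃ bas : Module.Basis (Fin (d + 1)) F V,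
    LinearMap.toMatrix bas bas A = Matrix.of (fun i j : Fin (d + 1) =>
      if (i : ℕ) = (j : ℕ) then thetaSeq q a d (i : ℕ)
      else if (i : ℕ) = (j : ℕ) + 1 then 1 else 0) ∧
    LinearMap.toMatrix bas bas As = Matrix.of (fun i j : Fin (d + 1) =>
      if (i : ℕ) = (j : ℕ) then thetaSeq q b d (i : ℕ)
      else if (j : ℕ) = (i : ℕ) + 1 then phiSeq q a b c d (j : ℕ) else 0)) ∧
  (∃ bas : Module.Basis (Fin (d + 1)) F V,
    LinearMap.toMatrix bas bas A = Matrix.of (fun i j : Fin (d + 1) =>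
      if (i : ℕ) = (j : ℕ) then thetaSeq q a d (d - (i : ℕ))
      else if (i : ℕ) = (j : ℕ) + 1 then 1 else 0) ∧
    LinearMap.toMatrix bas bas As = Matrix.of (fun i j : Fin (d + 1) =>
      if (i : ℕ) = (j : ℕ) then thetaSeq q b d (i : ℕ)
      else if (j : ℕ) = (i : ℕ) + 1 then phiSeq q a⁻¹ b c d (j : ℕ) else 0))

/-- `G(λ,s,t) = λ⁻²(λ-st)(λ-st⁻¹)(λ-s⁻¹t)(λ-s⁻¹t⁻¹)`. -/
noncomputable def Gfun {F : Type*} [Field F] (lam s t : F) : F :=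
  (lam ^ 2)⁻¹ * ((lam - s * t) * (lam - s * t⁻¹) * (lam - s⁻¹ * t) * (lam - s⁻¹ * t⁻¹))


theorem stmt3 {F : Type*} [Field F] [IsAlgClosed F] {q : F}
    (hq : q ≠ 0) (hqru : ∀ m : ℕ, 1 ≤ m → q ^ m ≠ 1)
    {V : Type*} [AddCommGroup V] [Module F V] [FiniteDimensional F V]
    (d : ℕ) (hd : 1 ≤ d) (hdim : Module.finrank F V = d + 1)
    (A As : Module.End F V) (hLP : IsLeonardPair A As)
    (hQRA : ∃ a : F, a ≠ 0 ∧ ∃ bas : Module.Basis (Fin (d + 1)) F V,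
      (∀ r : Fin (d + 1), A (bas r) = thetaSeq q a d (r : ℕ) • bas r) ∧
      IsIrredTridiagonal (LinearMap.toMatrix bas bas As))
    (hQRAs : ∃ b : F, b ≠ 0 ∧ ∃ bas : Module.Basis (Fin (d + 1)) F V,
      (∀ r : Fin (d + 1), As (bas r) = thetaSeq q b d (r : ℕ) • bas r) ∧
      IsIrredTridiagonal (LinearMap.toMatrix bas bas A))
    (E E' : Module.End F V)
    (hE1 : ∃ α : F, A + (q ^ 2 - q ^ (-2 : ℤ))⁻¹ • (q • (As * E) - q⁻¹ • (E * As))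
      = α • (1 : Module.End F V))
    (hE2 : ∃ β : F, As + (q ^ 2 - q ^ (-2 : ℤ))⁻¹ • (q • (E * A) - q⁻¹ • (A * E))
      = β • (1 : Module.End F V))
    (hE3 : ∃ γ : F, E + (q ^ 2 - q ^ (-2 : ℤ))⁻¹ • (q • (A * As) - q⁻¹ • (As * A))
      = γ • (1 : Module.End F V))
    (hE1' : ∃ α : F, A + (q ^ 2 - q ^ (-2 : ℤ))⁻¹ • (q • (As * E') - q⁻¹ • (E' * As))
      = α • (1 : Module.End F V))
    (hE2' : ∃ β : F, As + (q ^ 2 - q ^ (-2 : ℤ))⁻¹ • (q • (E' * A) - q⁻¹ • (A * E'))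
      = β • (1 : Module.End F V))
    (hE3' : ∃ γ : F, E' + (q ^ 2 - q ^ (-2 : ℤ))⁻¹ • (q • (A * As) - q⁻¹ • (As * A))
      = γ • (1 : Module.End F V)) :
    E = E' := by
  classical
  -- basic nonvanishing facts
  have hq2 : q ^ 2 ≠ 1 := hqru 2 (by norm_num)
  have hq4 : q ^ 4 ≠ 1 := hqru 4 (by norm_num)
  have hqinv : q - q⁻¹ ≠ 0 := by
    intro h
    apply hq2
    field_simp at h
    linear_combination h
  have hcne : (q ^ 2 - q ^ (-2 : ℤ)) ≠ 0 := by
    intro h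
    apply hq4
    have : q ^ (-2 : ℤ) = (q ^ 2)⁻¹ := by
      rw [zpow_neg, zpow_two, sq]
    rw [this] at h
    have hq2ne : q ^ 2 ≠ 0 := pow_ne_zero _ hq
    have : q ^ 2 * q ^ 2 = 1 := by
      field_simp at h
      linear_combination h
    calc q ^ 4 = q ^ 2 * q ^ 2 := by ring
    _ = 1 := this
  set c : F := (q ^ 2 - q ^ (-2 : ℤ))⁻¹ with hc
  have hcne' : c ≠ 0 := inv_ne_zero hcne
  obtain ⟨γ, hγ⟩ := hE3
  obtain ⟨γ', hγ'⟩ := hE3'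
  set K : Module.End F V := c • (q • (A * As) - q⁻¹ • (As * A)) with hK
  have hEE : E - E' = (γ - γ') • (1 : Module.End F V) := by
    have h1 : E - E' = (E + K) - (E' + K) := by abel
    rw [h1, hγ, hγ', sub_smul]
  set δ : F := γ - γ' with hδ
  suffices hδ0 : δ = 0 by
    have : E - E' = 0 := by rw [hEE, hδ0, zero_smul]
    exact sub_eq_zero.mp this
  by_contra hδ0
  obtain ⟨α, hα⟩ := hE1
  obtain ⟨α', hα'⟩ := hE1'
  -- subtracting the two relations
  have hsub : c • (q • (As * E) - q⁻¹ • (E * As)) - c • (q • (As * E') - q⁻¹ • (E' * As))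
      = (α - α') • (1 : Module.End F V) := by
    have h1 : c • (q • (As * E) - q⁻¹ • (E * As)) - c • (q • (As * E') - q⁻¹ • (E' * As))
        = (A + c • (q • (As * E) - q⁻¹ • (E * As)))
          - (A + c • (q • (As * E') - q⁻¹ • (E' * As))) := by abel
    rw [h1, hα, hα', sub_smul]
  have hE'eq : E = E' + δ • (1 : Module.End F V) := by
    rw [← hEE]; abel
  have hAsScal : (c * (q - q⁻¹) * δ) • As = (α - α') • (1 : Module.End F V) := by
    rw [← hsub, hE'eq]
    simp only [mul_add, add_mul, mul_smul_comm, smul_mul_assoc, mul_one, one_mul,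
      smul_add, smul_sub, smul_smul]
    module
  -- hence As is scalar, contradicting irreducible tridiagonality
  have hk : c * (q - q⁻¹) * δ ≠ 0 := by
    exact mul_ne_zero (mul_ne_zero hcne' hqinv) hδ0
  have hAs : As = ((c * (q - q⁻¹) * δ)⁻¹ * (α - α')) • (1 : Module.End F V) := by
    rw [mul_smul, ← hAsScal, smul_smul, inv_mul_cancel₀ hk, one_smul]
  obtain ⟨a, ha, bas, hdiag, htri⟩ := hQRA
  set μ : F := (c * (q - q⁻¹) * δ)⁻¹ * (α - α') with hμ
  have hmat : LinearMap.toMatrix bas bas As = μ • (1 : Matrix (Fin (d+1)) (Fin (d+1)) F) := by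
    rw [hAs]
    simp [LinearMap.toMatrix_one]
  have h10 : (⟨1, by omega⟩ : Fin (d+1)) ≠ (⟨0, by omega⟩ : Fin (d+1)) := by
    simp [Fin.ext_iff]
  have hzero : LinearMap.toMatrix bas bas As ⟨1, by omega⟩ ⟨0, by omega⟩ = 0 := by
    rw [hmat]
    simp only [Matrix.smul_apply, smul_eq_mul]
    rw [Matrix.one_apply_ne h10, mul_zero]
  exact htri.2.1 ⟨1, by omega⟩ ⟨0, by omega⟩ (by simp) hzero
end

section
/- Let R be an associative unital F-algebra containing invertible elements t_0, t_1, t_2, t_3 such that T_i := t_i + t_i^{-1} commutes with t_j for all 0 ≤ i, j ≤ 3 and t_0 t_1 t_2 t_3 = q^{-1}·1. Set X = t_3 t_0, G_0 = t_0 − t_3 t_0 t_3^{-1}, and G_2 = t_2 − t_1 t_2 t_1^{-1}. Then X G_0 = G_0 X^{-1}, X^{-1} G_0 = G_0 X, X G_2 = q^{-2} G_2 X^{-1}, and X^{-1} G_2 = q^2 G_2 X. -/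
lemma key {R : Type*} [Ring R] (a b a' b' : R)
    (haa : a * a' = 1) (_ha'a : a' * a = 1) (hbb : b * b' = 1) (hb'b : b' * b = 1)
    (h1 : (a + a') * b = b * (a + a')) (h2 : (b + b') * a = a * (b + b')) :
    (a * b) * (b - a * b * a') = (b - a * b * a') * (b' * a') := by
  have K1 : ∀ x : R, b * (b' * x) = x := fun x => by rw [← mul_assoc, hbb, one_mul]
  have K2 : ∀ x : R, b' * (b * x) = x := fun x => by rw [← mul_assoc, hb'b, one_mul]
  have K3 : ∀ x : R, a * (a' * x) = x := fun x => by rw [← mul_assoc, haa, one_mul]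
  have e1 : a * b' = b * a + b' * a - a * b := by
    have h : b * a + b' * a = a * b + a * b' := by
      have := h2; rw [add_mul, mul_add] at this; exact this
    linear_combination (norm := noncomm_ring) -h
  have e2 : a' * b' = b' * a + b' * a' - a * b' := by
    have hc : (a + a') * b' = b' * (a + a') := by
      have := congrArg (fun x => b' * (x * b')) h1
      simpa [mul_assoc, hbb, mul_one, K2] using this.symm
    have h : a * b' + a' * b' = b' * a + b' * a' := by
      rw [add_mul, mul_add] at hc; exact hc
    linear_combination (norm := noncomm_ring) h
  have main : a * b * (a' * (b' * a')) = a' - a * (b * b) + a * (b * (a * (b * a'))) := by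
    have s1 : a * b * (a' * (b' * a')) = a * (b * ((a' * b') * a')) := by noncomm_ring
    rw [s1, e2]
    have s2 : a * (b * ((b' * a + b' * a' - a * b') * a'))
        = a * (b * (b' * (a * a'))) + a * (b * (b' * (a' * a'))) - a * (b * ((a * b') * a')) := by
      noncomm_ring
    rw [s2, e1]
    have s4 : a * (b * ((b * a + b' * a - a * b) * a'))
        = a * (b * (b * (a * a'))) + a * (b * (b' * (a * a'))) - a * (b * (a * (b * a'))) := by
      noncomm_ring
    rw [s4, haa]
    simp only [mul_one, hbb, K1, K3]
    abel
  have step : (b - a * b * a') * (b' * a') = a' - a * b * (a' * (b' * a')) := by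
    calc (b - a * b * a') * (b' * a') = b * (b' * a') - a * b * (a' * (b' * a')) := by noncomm_ring
      _ = a' - a * b * (a' * (b' * a')) := by rw [K1]
  calc (a * b) * (b - a * b * a')
      = a * (b * b) - a * (b * (a * (b * a'))) := by noncomm_ring
    _ = a' - (a' - a * (b * b) + a * (b * (a * (b * a')))) := by abel
    _ = a' - (a * b * (a' * (b' * a'))) := by rw [main]
    _ = (b - a * b * a') * (b' * a') := step.symm

lemma key2 {R : Type*} [Ring R] (X Xi G : R) (hXiX : Xi * X = 1)
    (h : X * G = G * Xi) : Xi * G = G * X := by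
  calc Xi * G = Xi * ((G * Xi) * X) := by rw [mul_assoc, hXiX, mul_one]
    _ = Xi * ((X * G) * X) := by rw [← h]
    _ = (Xi * X) * (G * X) := by noncomm_ring
    _ = G * X := by rw [hXiX, one_mul]

lemma twist {F : Type*} [Field F] {R : Type*} [Ring R] [Algebra F R]
    (c : F) (hc : c ≠ 0) (X Xi G : R)
    (hXXi : X * Xi = 1) (h : Xi * G = c • (G * X)) :
    X * G = c⁻¹ • (G * Xi) := by
  have hGX : G * X = c⁻¹ • (Xi * G) := by
    rw [h, smul_smul, inv_mul_cancel₀ hc, one_smul]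
  have assoc : X * ((Xi * G) * Xi) = (X * Xi) * (G * Xi) := by noncomm_ring
  calc X * G = X * ((G * X) * Xi) := by rw [mul_assoc, hXXi, mul_one]
    _ = X * ((c⁻¹ • (Xi * G)) * Xi) := by rw [hGX]
    _ = c⁻¹ • (X * ((Xi * G) * Xi)) := by rw [smul_mul_assoc, mul_smul_comm]
    _ = c⁻¹ • ((X * Xi) * (G * Xi)) := by rw [assoc]
    _ = c⁻¹ • (G * Xi) := by rw [hXXi, one_mul]

theorem stmt5 {F : Type*} [Field F] [IsAlgClosed F] {q : F}
    (hq : q ≠ 0) (hqru : ∀ m : ℕ, 1 ≤ m → q ^ m ≠ 1)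
    {R : Type*} [Ring R] [Algebra F R]
    (t s : Fin 4 → R)
    (hts : ∀ i, t i * s i = 1) (hst : ∀ i, s i * t i = 1)
    (hcomm : ∀ i j, Commute (t i + s i) (t j))
    (hprod : t 0 * t 1 * t 2 * t 3 = algebraMap F R q⁻¹) :
    (t 3 * t 0) * (t 0 - t 3 * t 0 * s 3) = (t 0 - t 3 * t 0 * s 3) * (s 0 * s 3) ∧
    (s 0 * s 3) * (t 0 - t 3 * t 0 * s 3) = (t 0 - t 3 * t 0 * s 3) * (t 3 * t 0) ∧
    (t 3 * t 0) * (t 2 - t 1 * t 2 * s 1)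
      = (q ^ 2)⁻¹ • ((t 2 - t 1 * t 2 * s 1) * (s 0 * s 3)) ∧
    (s 0 * s 3) * (t 2 - t 1 * t 2 * s 1)
      = q ^ 2 • ((t 2 - t 1 * t 2 * s 1) * (t 3 * t 0)) := by
  have hA : t 0 * t 1 * t 2 * t 3 = q⁻¹ • (1 : R) := by
    rw [hprod, Algebra.algebraMap_eq_smul_one]
  have hXXi : (t 3 * t 0) * (s 0 * s 3) = 1 := by
    have e : (t 3 * t 0) * (s 0 * s 3) = t 3 * ((t 0 * s 0) * s 3) := by noncomm_ring
    rw [e, hts 0, one_mul, hts 3]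
  have hXiX : (s 0 * s 3) * (t 3 * t 0) = 1 := by
    have e : (s 0 * s 3) * (t 3 * t 0) = s 0 * ((s 3 * t 3) * t 0) := by noncomm_ring
    rw [e, hst 3, one_mul, hst 0]
  -- first identity
  have id1 := key (t 3) (t 0) (s 3) (s 0) (hts 3) (hst 3) (hts 0) (hst 0)
    ((hcomm 3 0).eq) ((hcomm 0 3).eq)
  have id2 := key2 (t 3 * t 0) (s 0 * s 3) (t 0 - t 3 * t 0 * s 3) hXiX id1
  -- relation t1 t2 = q⁻¹ • (s0 s3)
  have h12 : t 1 * t 2 = q⁻¹ • (s 0 * s 3) := by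
    have e1 : t 1 * t 2 = (s 0 * t 0) * (t 1 * t 2) * (t 3 * s 3) := by
      rw [hst 0, one_mul, hts 3, mul_one]
    have e2 : (s 0 * t 0) * (t 1 * t 2) * (t 3 * s 3)
        = s 0 * ((t 0 * t 1 * t 2 * t 3) * s 3) := by noncomm_ring
    rw [e1, e2, hA, smul_mul_assoc, one_mul, mul_smul_comm]
  have hB : (t 3 * t 0) * (t 1 * t 2) = q⁻¹ • (1 : R) := by
    have e1 : t 3 * ((t 0 * t 1 * t 2 * t 3) * s 3)
        = (t 3 * t 0) * (t 1 * t 2) * (t 3 * s 3) := by noncomm_ring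
    calc (t 3 * t 0) * (t 1 * t 2)
        = (t 3 * t 0) * (t 1 * t 2) * (t 3 * s 3) := by rw [hts 3, mul_one]
      _ = t 3 * ((t 0 * t 1 * t 2 * t 3) * s 3) := e1.symm
      _ = t 3 * ((q⁻¹ • (1 : R)) * s 3) := by rw [hA]
      _ = q⁻¹ • (1 : R) := by
          rw [smul_mul_assoc, one_mul, mul_smul_comm, hts 3]
  have hinv : (t 1 * t 2) * (s 2 * s 1) = 1 := by
    have e : (t 1 * t 2) * (s 2 * s 1) = t 1 * ((t 2 * s 2) * s 1) := by noncomm_ring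
    rw [e, hts 2, one_mul, hts 1]
  have h21 : s 2 * s 1 = q • (t 3 * t 0) := by
    symm
    calc q • (t 3 * t 0) = q • ((t 3 * t 0) * ((t 1 * t 2) * (s 2 * s 1))) := by
          rw [hinv, mul_one]
      _ = q • (((t 3 * t 0) * (t 1 * t 2)) * (s 2 * s 1)) := by congr 1; noncomm_ring
      _ = q • ((q⁻¹ • (1 : R)) * (s 2 * s 1)) := by rw [hB]
      _ = (q * q⁻¹) • (s 2 * s 1) := by rw [smul_mul_assoc, one_mul, smul_smul]
      _ = s 2 * s 1 := by rw [mul_inv_cancel₀ hq, one_smul]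
  have k := key (t 1) (t 2) (s 1) (s 2) (hts 1) (hst 1) (hts 2) (hst 2)
    ((hcomm 1 2).eq) ((hcomm 2 1).eq)
  set G2 : R := t 2 - t 1 * t 2 * s 1 with hG2
  rw [h12, h21, smul_mul_assoc, mul_smul_comm] at k
  have id4 : (s 0 * s 3) * G2 = q ^ 2 • (G2 * (t 3 * t 0)) := by
    calc (s 0 * s 3) * G2
        = q • (q⁻¹ • ((s 0 * s 3) * G2)) := by
          rw [smul_smul, mul_inv_cancel₀ hq, one_smul]
      _ = q • (q • (G2 * (t 3 * t 0))) := by rw [k]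
      _ = q ^ 2 • (G2 * (t 3 * t 0)) := by rw [smul_smul, ← pow_two]
  have id3 := twist (q ^ 2) (pow_ne_zero 2 hq) (t 3 * t 0) (s 0 * s 3)
    G2 hXXi id4
  exact ⟨id1, id2, id3, id4⟩
end

section
/- Let R be an associative unital F-algebra containing invertible elements t_0, t_1, t_2, t_3 such that T_i := t_i + t_i^{-1} commutes with t_j for all 0 ≤ i, j ≤ 3 and t_0 t_1 t_2 t_3 = q^{-1}·1. Set X = t_3 t_0, G_0 = t_0 − t_3 t_0 t_3^{-1}, and G_2 = t_2 − t_1 t_2 t_1^{-1}. Then G_0^2 = (X + X^{-1})^2 − (X + X^{-1}) T_0 T_3 + T_0^2 + T_3^2 − 4 and G_2^2 = (qX + q^{-1}X^{-1})^2 − (qX + q^{-1}X^{-1}) T_1 T_2 + T_1^2 + T_2^2 − 4. -/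
private theorem keyLemma6 {R : Type*} [Ring R] (a b A B : R)
    (hAa : A * a = a * A) (hAb : A * b = b * A)
    (hBa : B * a = a * B) (hBb : B * b = b * B)
    (hAB : A * B = B * A)
    (ha : a * a = A * a - 1) (hb : b * b = B * b - 1) :
    (a - b * a * (B - b)) ^ 2 =
      (b * a + (A - a) * (B - b)) ^ 2
        - (b * a + (A - a) * (B - b)) * (A * B)
        + A ^ 2 + B ^ 2 - 4 := by
  have h1 : ∀ x : R, a * (a * x) = A * (a * x) - x := fun x => by
    rw [← mul_assoc, ha, sub_mul, one_mul, mul_assoc]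
  have h2 : ∀ x : R, b * (b * x) = B * (b * x) - x := fun x => by
    rw [← mul_assoc, hb, sub_mul, one_mul, mul_assoc]
  have h3 : ∀ x : R, a * (A * x) = A * (a * x) := fun x => by
    rw [← mul_assoc, ← hAa, mul_assoc]
  have h4 : ∀ x : R, b * (A * x) = A * (b * x) := fun x => by
    rw [← mul_assoc, ← hAb, mul_assoc]
  have h5 : ∀ x : R, a * (B * x) = B * (a * x) := fun x => by
    rw [← mul_assoc, ← hBa, mul_assoc]
  have h6 : ∀ x : R, b * (B * x) = B * (b * x) := fun x => by
    rw [← mul_assoc, ← hBb, mul_assoc]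
  have h7 : ∀ x : R, B * (A * x) = A * (B * x) := fun x => by
    rw [← mul_assoc, ← hAB, mul_assoc]
  simp only [pow_two, mul_sub, sub_mul, mul_add, add_mul, mul_one, one_mul,
    mul_assoc, h1, h2, h3, h4, h5, h6, h7, ha, hb, hAa.symm, hAb.symm, hBa.symm, hBb.symm,
    hAB.symm]
  rw [show (4:R) = 1+1+1+1 by norm_num]
  noncomm_ring

private theorem commuteInv6 {R : Type*} [Ring R] {x u v : R}
    (huv : u * v = 1) (hvu : v * u = 1) (h : Commute x u) : Commute x v := by
  show x * v = v * x
  calc x * v = (v * u) * (x * v) := by rw [hvu, one_mul]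
    _ = v * ((u * x) * v) := by noncomm_ring
    _ = v * ((x * u) * v) := by rw [h.eq]
    _ = v * x := by rw [mul_assoc, huv, mul_one]


theorem stmt6 {F : Type*} [Field F] [IsAlgClosed F] {q : F}
    (hq : q ≠ 0) (hqru : ∀ m : ℕ, 1 ≤ m → q ^ m ≠ 1)
    {R : Type*} [Ring R] [Algebra F R]
    (t s : Fin 4 → R)
    (hts : ∀ i, t i * s i = 1) (hst : ∀ i, s i * t i = 1)
    (hcomm : ∀ i j, Commute (t i + s i) (t j))
    (hprod : t 0 * t 1 * t 2 * t 3 = algebraMap F R q⁻¹) :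
    (t 0 - t 3 * t 0 * s 3) ^ 2 =
      (t 3 * t 0 + s 0 * s 3) ^ 2
        - (t 3 * t 0 + s 0 * s 3) * ((t 0 + s 0) * (t 3 + s 3))
        + (t 0 + s 0) ^ 2 + (t 3 + s 3) ^ 2 - 4 ∧
    (t 2 - t 1 * t 2 * s 1) ^ 2 =
      (q • (t 3 * t 0) + q⁻¹ • (s 0 * s 3)) ^ 2
        - (q • (t 3 * t 0) + q⁻¹ • (s 0 * s 3)) * ((t 1 + s 1) * (t 2 + s 2))
        + (t 1 + s 1) ^ 2 + (t 2 + s 2) ^ 2 - 4 := by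
  have commAB : ∀ i j : Fin 4, (t i + s i) * ((t j + s j)) = (t j + s j) * (t i + s i) := by
    intro i j
    exact (((hcomm i j).add_right (commuteInv6 (hts j) (hst j) (hcomm i j)))).eq
  have hsq : ∀ i : Fin 4, t i * t i = (t i + s i) * t i - 1 := by
    intro i
    rw [add_mul, hst]
    abel
  -- Part 1
  have k1 := keyLemma6 (t 0) (t 3) (t 0 + s 0) (t 3 + s 3)
    (hcomm 0 0).eq (hcomm 0 3).eq (hcomm 3 0).eq (hcomm 3 3).eq
    (commAB 0 3) (hsq 0) (hsq 3)
  simp only [add_sub_cancel_left] at k1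
  refine ⟨k1, ?_⟩
  -- Part 2
  have k2 := keyLemma6 (t 2) (t 1) (t 2 + s 2) (t 1 + s 1)
    (hcomm 2 2).eq (hcomm 2 1).eq (hcomm 1 2).eq (hcomm 1 1).eq
    (commAB 2 1) (hsq 2) (hsq 1)
  simp only [add_sub_cancel_left] at k2
  have h12 : t 1 * t 2 = q⁻¹ • (s 0 * s 3) := by
    have e1 : t 1 * t 2 = s 0 * (t 0 * t 1 * t 2 * t 3) * s 3 := by
      calc t 1 * t 2 = (s 0 * t 0) * (t 1 * t 2) * (t 3 * s 3) := by
            rw [hst, hts, one_mul, mul_one]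
        _ = s 0 * (t 0 * t 1 * t 2 * t 3) * s 3 := by noncomm_ring
    rw [e1, hprod, ← Algebra.commutes q⁻¹ (s 0), mul_assoc, ← Algebra.smul_def]
  have h1234 : t 1 * t 2 * (t 3 * t 0) = algebraMap F R q⁻¹ := by
    calc t 1 * t 2 * (t 3 * t 0) = (s 0 * t 0) * (t 1 * t 2 * (t 3 * t 0)) := by
          rw [hst, one_mul]
      _ = s 0 * (t 0 * t 1 * t 2 * t 3) * t 0 := by noncomm_ring
      _ = s 0 * algebraMap F R q⁻¹ * t 0 := by rw [hprod]
      _ = algebraMap F R q⁻¹ * (s 0 * t 0) := by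
          rw [← Algebra.commutes q⁻¹ (s 0), mul_assoc]
      _ = algebraMap F R q⁻¹ := by rw [hst, mul_one]
  have hright : (t 1 * t 2) * (q • (t 3 * t 0)) = 1 := by
    rw [mul_smul_comm, h1234, Algebra.smul_def, ← map_mul, mul_inv_cancel₀ hq, map_one]
  have h21 : s 2 * s 1 = q • (t 3 * t 0) := by
    calc s 2 * s 1 = s 2 * s 1 * ((t 1 * t 2) * (q • (t 3 * t 0))) := by
          rw [hright, mul_one]
      _ = (s 2 * ((s 1 * t 1) * t 2)) * (q • (t 3 * t 0)) := by noncomm_ring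
      _ = q • (t 3 * t 0) := by rw [hst, one_mul, hst, one_mul]
  have hB : t 1 * t 2 + s 2 * s 1 = q • (t 3 * t 0) + q⁻¹ • (s 0 * s 3) := by
    rw [h12, h21, add_comm]
  rw [hB, commAB 2 1] at k2
  refine k2.trans ?_
  abel
end

section
/- Let V be an XD H_q-module and let μ ∈ F be nonzero. Then G_0·V_X(μ) ⊆ V_X(μ^{-1}) and G_2·V_X(μ) ⊆ V_X(q^{-2}μ^{-1}); that is, for every v ∈ V with X v = μ v one has X(G_0 v) = μ^{-1}·G_0 v and X(G_2 v) = q^{-2}μ^{-1}·G_2 v. -/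
section Aux

lemma key_s7 {R : Type*} [Ring R] (a a' d d' : R)
    (h1 : a * a' = 1) (h2 : a' * a = 1) (h3 : d * d' = 1) (h4 : d' * d = 1)
    (hc : (a + a') * d = d * (a + a')) (hc2 : (d + d') * a = a * (d + d')) :
    (d * a) * (a - d * a * d') = (a - d * a * d') * (a' * d') := by
  have e8 : d * a * d' + d * a' * d' = a + a' := by
    calc d * a * d' + d * a' * d' = d * (a + a') * d' := by noncomm_ring
      _ = (a + a') * d * d' := by rw [← hc]
      _ = a + a' := by rw [mul_assoc, h3, mul_one]
  have h9 : a' * (d + d') = (d + d') * a' := by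
    calc a' * (d + d') = a' * ((d + d') * (a * a')) := by rw [h1, mul_one]
      _ = a' * (((d + d') * a) * a') := by rw [mul_assoc]
      _ = a' * ((a * (d + d')) * a') := by rw [hc2]
      _ = (a' * a) * ((d + d') * a') := by noncomm_ring
      _ = (d + d') * a' := by rw [h2, one_mul]
  have h10 : a' * d + a' * d' = d * a' + d' * a' := by
    have h := h9; rw [mul_add, add_mul] at h; exact h
  have e5 : d' * a' = a' * d + a' * d' - d * a' := by rw [h10]; abel
  have e9 : d * a * (d * a * d' + d * a' * d') = d * a * a + d := by
    rw [e8, mul_add]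
    congr 1
    rw [mul_assoc, h1, mul_one]
  have eA : d * a * (a - d * a * d') = d * a * d * (a' * d') - d := by
    calc d * a * (a - d * a * d')
        = (d * a * a + d) - d * a * (d * a * d' + d * a' * d')
          + (d * a * d * (a' * d') - d) := by noncomm_ring
      _ = d * a * (d * a * d' + d * a' * d') - d * a * (d * a * d' + d * a' * d')
          + (d * a * d * (a' * d') - d) := by rw [← e9]
      _ = d * a * d * (a' * d') - d := by abel
  have eB : (a - d * a * d') * (a' * d') = d * a * d * (a' * d') - d := by
    calc (a - d * a * d') * (a' * d')
        = (a * a') * d' - d * a * ((d' * a') * d') := by noncomm_ring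
      _ = d' - d * a * ((a' * d + a' * d' - d * a') * d') := by rw [h1, e5, one_mul]
      _ = d' - ((d * (a * a')) * (d * d') + ((d * (a * a')) * d') * d'
            - d * a * d * (a' * d')) := by noncomm_ring
      _ = d' - (d + d' - d * a * d * (a' * d')) := by
            simp only [h1, h3, mul_one, one_mul]
      _ = d * a * d * (a' * d') - d := by abel
  exact eA.trans eB.symm

end Aux


theorem stmt7 {F : Type*} [Field F] [IsAlgClosed F] {q : F}
    (hq : q ≠ 0) (hqru : ∀ m : ℕ, 1 ≤ m → q ^ m ≠ 1)
    {V : Type*} [AddCommGroup V] [Module F V] [FiniteDimensional F V]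
    (M : HqMod F q V) (hirr : M.Irreducible) (hX : Diagonalizable M.X)
    (μ : F) (hμ : μ ≠ 0) (v : V) (hv : M.X v = μ • v) :
    M.X (M.G0 v) = μ⁻¹ • M.G0 v ∧ M.X (M.G2 v) = ((q ^ 2)⁻¹ * μ⁻¹) • M.G2 v := by
  have hXXinv : M.X * M.Xinv = 1 := by
    show (M.t 3 * M.t 0) * (M.s 0 * M.s 3) = 1
    calc (M.t 3 * M.t 0) * (M.s 0 * M.s 3)
        = M.t 3 * ((M.t 0 * M.s 0) * M.s 3) := by noncomm_ring
      _ = 1 := by rw [M.ts 0, one_mul, M.ts 3]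
  have hXinvX : M.Xinv * M.X = 1 := by
    show (M.s 0 * M.s 3) * (M.t 3 * M.t 0) = 1
    calc (M.s 0 * M.s 3) * (M.t 3 * M.t 0)
        = M.s 0 * ((M.s 3 * M.t 3) * M.t 0) := by noncomm_ring
      _ = 1 := by rw [M.st 3, one_mul, M.st 0]
  have hXinv_v : M.Xinv v = μ⁻¹ • v := by
    have h0 : M.Xinv (M.X v) = v := by
      rw [← Module.End.mul_apply, hXinvX, Module.End.one_apply]
    rw [hv, map_smul] at h0
    have h1 := congrArg (fun u : V => μ⁻¹ • u) h0
    simp only [smul_smul, inv_mul_cancel₀ hμ, one_smul] at h1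
    exact h1
  constructor
  · have k0 : M.X * M.G0 = M.G0 * M.Xinv := by
      show (M.t 3 * M.t 0) * (M.t 0 - M.t 3 * M.t 0 * M.s 3)
          = (M.t 0 - M.t 3 * M.t 0 * M.s 3) * (M.s 0 * M.s 3)
      exact key_s7 (M.t 0) (M.s 0) (M.t 3) (M.s 3) (M.ts 0) (M.st 0) (M.ts 3) (M.st 3)
        (M.central 0 3).eq (M.central 3 0).eq
    have h := congrArg (fun f : Module.End F V => f v) k0
    simp only [Module.End.mul_apply] at h
    rw [h, hXinv_v, map_smul]
  · have k2 : (M.t 1 * M.t 2) * M.G2 = M.G2 * (M.s 2 * M.s 1) := by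
      show (M.t 1 * M.t 2) * (M.t 2 - M.t 1 * M.t 2 * M.s 1)
          = (M.t 2 - M.t 1 * M.t 2 * M.s 1) * (M.s 2 * M.s 1)
      exact key_s7 (M.t 2) (M.s 2) (M.t 1) (M.s 1) (M.ts 2) (M.st 2) (M.ts 1) (M.st 1)
        (M.central 2 1).eq (M.central 1 2).eq
    have k2' : (M.t 1 * M.t 2) * M.G2 * (M.t 1 * M.t 2) = M.G2 := by
      rw [k2]
      calc M.G2 * (M.s 2 * M.s 1) * (M.t 1 * M.t 2)
          = M.G2 * (M.s 2 * ((M.s 1 * M.t 1) * M.t 2)) := by noncomm_ring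
        _ = M.G2 := by rw [M.st 1, one_mul, M.st 2, mul_one]
    have hT : M.t 1 * M.t 2 = q⁻¹ • M.Xinv := by
      have hre : M.s 0 * ((M.t 0 * M.t 1 * M.t 2 * M.t 3) * M.s 3) = M.t 1 * M.t 2 := by
        calc M.s 0 * ((M.t 0 * M.t 1 * M.t 2 * M.t 3) * M.s 3)
            = (M.s 0 * M.t 0) * (M.t 1 * M.t 2) * (M.t 3 * M.s 3) := by noncomm_ring
          _ = M.t 1 * M.t 2 := by rw [M.st 0, M.ts 3, one_mul, mul_one]
      rw [← hre, M.prodEq]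
      show M.s 0 * ((q⁻¹ • (1 : Module.End F V)) * M.s 3) = q⁻¹ • (M.s 0 * M.s 3)
      rw [smul_mul_assoc, one_mul, mul_smul_comm]
    rw [hT] at k2'
    have k2'' : (q⁻¹ * q⁻¹) • (M.Xinv * M.G2 * M.Xinv) = M.G2 := by
      calc (q⁻¹ * q⁻¹) • (M.Xinv * M.G2 * M.Xinv)
          = q⁻¹ • M.Xinv * M.G2 * q⁻¹ • M.Xinv := by
            simp only [smul_mul_assoc, mul_smul_comm, smul_smul]
        _ = M.G2 := k2'
    have happ := congrArg (fun f : Module.End F V => f v) k2''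
    simp only [LinearMap.smul_apply, Module.End.mul_apply] at happ
    rw [hXinv_v, map_smul, map_smul, smul_smul] at happ
    have hfin := congrArg M.X happ.symm
    rw [map_smul] at hfin
    have hx : M.X (M.Xinv (M.G2 v)) = M.G2 v := by
      rw [← Module.End.mul_apply, hXXinv, Module.End.one_apply]
    rw [hx] at hfin
    rw [hfin, sq, mul_inv]
end

section
/- Let V be an H_q-module with parameter sequence (k_0,k_1,k_2,k_3), and for nonzero λ, s, t ∈ F define G(λ,s,t) = λ^{−2}(λ − st)(λ − st^{−1})(λ − s^{−1}t)(λ − s^{−1}t^{−1}). Then for every nonzero μ ∈ F and every v ∈ V with X v = μ v, one has G_0^2 v = G(μ, k_0, k_3)·v and G_2^2 v = G(qμ, k_1, k_2)·v. -/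
private lemma core_lemma {F : Type*} [Field F] {V : Type*} [AddCommGroup V] [Module F V]
    (t3 t0 s3 s0 : Module.End F V)
    (h3a : t3 * s3 = 1) (h3b : s3 * t3 = 1)
    (h0a : t0 * s0 = 1) (h0b : s0 * t0 = 1)
    (β3 β0 : F) (hb3 : t3 + s3 = β3 • 1) (hb0 : t0 + s0 = β0 • 1)
    (μ : F) (hμ : μ ≠ 0) (v : V) (hv : (t3 * t0) v = μ • v) :
    (s3 * (t3 * t0) - (t3 * t0) * s3) ((s3 * (t3 * t0) - (t3 * t0) * s3) v)
      = ((μ + μ⁻¹) ^ 2 - β0 * β3 * (μ + μ⁻¹) + β0 ^ 2 + β3 ^ 2 - 4) • v := by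
  set u := t0 v with hu
  have hXi : (s0 * s3) * (t3 * t0) = 1 := by
    calc (s0 * s3) * (t3 * t0) = s0 * ((s3 * t3) * t0) := by noncomm_ring
    _ = 1 := by rw [h3b, one_mul, h0b]
  have hXiv : (s0 * s3) v = μ⁻¹ • v := by
    have h := DFunLike.congr_fun hXi v
    rw [Module.End.mul_apply, hv, map_smul, Module.End.one_apply] at h
    calc (s0 * s3) v = μ⁻¹ • (μ • ((s0 * s3) v)) := by
          rw [smul_smul, inv_mul_cancel₀ hμ, one_smul]
    _ = μ⁻¹ • v := by rw [h]
  have he : t0 * (s0 * s3) = s3 := by rw [← mul_assoc, h0a, one_mul]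
  have hs3v : s3 v = μ⁻¹ • u := by
    conv_lhs => rw [← he]
    rw [Module.End.mul_apply, hXiv, map_smul, ← hu]
  have ht3v : t3 v = β3 • v - μ⁻¹ • u := by
    have h : t3 v + s3 v = β3 • v := by
      have := DFunLike.congr_fun hb3 v
      simpa using this
    rw [hs3v] at h
    exact eq_sub_of_add_eq h
  have hs0u : s0 u = v := by
    have := DFunLike.congr_fun h0b v
    simpa [Module.End.mul_apply, ← hu] using this
  have ht0u : t0 u = β0 • u - v := by
    have h : t0 u + s0 u = β0 • u := by
      have := DFunLike.congr_fun hb0 u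
      simpa using this
    rw [hs0u] at h
    exact eq_sub_of_add_eq h
  have ht3u : t3 u = μ • v := by rw [hu, ← Module.End.mul_apply, hv]
  have hXu : (t3 * t0) u = (β0 * μ - β3) • v + μ⁻¹ • u := by
    rw [Module.End.mul_apply, ht0u, map_sub, map_smul, ht3u, ht3v]
    module
  have hXiu : (s0 * s3) u = μ • u - (β0 * μ - β3) • v := by
    have h := DFunLike.congr_fun hXi u
    rw [Module.End.mul_apply, hXu, map_add, map_smul, map_smul, hXiv,
      Module.End.one_apply] at h
    have h2 : μ⁻¹ • ((s0 * s3) u) = u - (β0 * μ - β3) • μ⁻¹ • v :=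
      eq_sub_of_add_eq' h
    calc (s0 * s3) u = μ • (μ⁻¹ • ((s0 * s3) u)) := by
          rw [smul_smul, mul_inv_cancel₀ hμ, one_smul]
    _ = μ • (u - (β0 * μ - β3) • μ⁻¹ • v) := by rw [h2]
    _ = μ • u - (β0 * μ - β3) • v := by
          match_scalars <;> field_simp
  have hs3u : s3 u = β3 • u - μ • v := by
    conv_lhs => rw [← he]
    rw [Module.End.mul_apply, hXiu, map_sub, map_smul, map_smul, ht0u, ← hu]
    module
  have hGv : (s3 * (t3 * t0) - (t3 * t0) * s3) v
      = (β3 * μ⁻¹ - β0) • v + (1 - μ⁻¹ * μ⁻¹) • u := by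
    rw [LinearMap.sub_apply, Module.End.mul_apply, hv, map_smul, hs3v,
      Module.End.mul_apply, hs3v, map_smul, hXu]
    match_scalars <;> field_simp <;> ring
  have hGu : (s3 * (t3 * t0) - (t3 * t0) * s3) u
      = (μ * μ + β3 * β3 - β0 * β3 * μ - 1) • v + (β0 - β3 * μ⁻¹) • u := by
    rw [LinearMap.sub_apply, Module.End.mul_apply, hXu, map_add, map_smul,
      map_smul, hs3v, hs3u, Module.End.mul_apply, hs3u, map_sub, map_smul,
      map_smul, hXu, hv]
    match_scalars <;> field_simp <;> ring
  rw [hGv, map_add, map_smul, map_smul, hGv, hGu]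
  match_scalars <;> field_simp <;> ring

theorem stmt8 {F : Type*} [Field F] [IsAlgClosed F] {q : F}
    (hq : q ≠ 0) (hqru : ∀ m : ℕ, 1 ≤ m → q ^ m ≠ 1)
    {V : Type*} [AddCommGroup V] [Module F V] [FiniteDimensional F V]
    (M : HqMod F q V) (k : Fin 4 → F) (hk : M.IsParamSeq k)
    (μ : F) (hμ : μ ≠ 0) (v : V) (hv : M.X v = μ • v) :
    M.G0 (M.G0 v) = Gfun μ (k 0) (k 3) • v ∧
    M.G2 (M.G2 v) = Gfun (q * μ) (k 1) (k 2) • v := by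
  have hk0 := (hk 0).1
  have hk1 := (hk 1).1
  have hk2 := (hk 2).1
  have hk3 := (hk 3).1
  have hvX : (M.t 3 * M.t 0) v = μ • v := hv
  constructor
  · have h1 := core_lemma (M.t 3) (M.t 0) (M.s 3) (M.s 0) (M.ts 3) (M.st 3)
      (M.ts 0) (M.st 0) _ _ (hk 3).2 (hk 0).2 μ hμ v hvX
    have hG0 : M.G0 = M.s 3 * (M.t 3 * M.t 0) - (M.t 3 * M.t 0) * M.s 3 := by
      unfold HqMod.G0
      rw [← mul_assoc, M.st 3, one_mul, mul_assoc]
    rw [hG0, h1]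
    congr 1
    unfold Gfun
    rw [show (μ ^ 2 : F)⁻¹ = μ⁻¹ ^ 2 from (inv_pow μ 2).symm]
    have hm : μ * μ⁻¹ = 1 := mul_inv_cancel₀ hμ
    have hka : k 0 * (k 0)⁻¹ = 1 := mul_inv_cancel₀ hk0
    have hkb : k 3 * (k 3)⁻¹ = 1 := mul_inv_cancel₀ hk3
    linear_combination ((2 : F) + (-1 : F)*(k 0)⁻¹^2*(k 3)*(k 3)⁻¹ + (-1 : F)*(k 0)*(k 0)⁻¹*(k 3)⁻¹^2 + (-2 : F)*(k 0)*(k 0)⁻¹*(k 3)*(k 3)⁻¹ + (-1 : F)*(k 0)*(k 0)⁻¹*(k 3)^2 + (-1 : F)*(k 0)^2*(k 3)*(k 3)⁻¹ + μ⁻¹*(k 0)*(k 0)⁻¹^2*(k 3)*(k 3)⁻¹^2 + μ⁻¹*(k 0)*(k 0)⁻¹^2*(k 3)^2*(k 3)⁻¹ + μ⁻¹*(k 0)^2*(k 0)⁻¹*(k 3)*(k 3)⁻¹^2 + μ⁻¹*(k 0)^2*(k 0)⁻¹*(k 3)^2*(k 3)⁻¹ + μ*(k 0)⁻¹*(k 3)⁻¹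 + μ*(k 0)⁻¹*(k 3) + μ*(k 0)*(k 3)⁻¹ + μ*(k 0)*(k 3) + (-1 : F)*μ*μ⁻¹*(k 0)⁻¹^2*(k 3)*(k 3)⁻¹ + (-1 : F)*μ*μ⁻¹*(k 0)*(k 0)⁻¹*(k 3)⁻¹^2 + (-2 : F)*μ*μ⁻¹*(k 0)*(k 0)⁻¹*(k 3)*(k 3)⁻¹ + (-1 : F)*μ*μ⁻¹*(k 0)*(k 0)⁻¹*(k 3)^2 + (-1 : F)*μ*μ⁻¹*(k 0)^2*(k 3)*(k 3)⁻¹ + (-1 : F)*μ^2 + μ^2*μ⁻¹*(k 0)⁻¹*(k 3)⁻¹ + μ^2*μ⁻¹*(k 0)⁻¹*(k 3) + μ^2*μ⁻¹*(k 0)*(k 3)⁻¹ + μ^2*μ⁻¹*(k 0)*(k 3) + (-1 : F)*μ^3*μ⁻¹) * hm + ((2 : F) + (-1 : F)*(k 3)⁻¹^2 + (-2 : F)*(k 3)*(k 3)⁻¹ + (-1 : F)*(k 3)^2 + μ⁻¹*(k 0)⁻¹*(k 3)*(k 3)⁻¹^2 + μ⁻¹*(k 0)⁻¹*(k 3)^2*(k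 3)⁻¹ + μ⁻¹*(k 0)*(k 3)*(k 3)⁻¹^2 + μ⁻¹*(k 0)*(k 3)^2*(k 3)⁻¹ + (-1 : F)*μ⁻¹^2*(k 3)^2*(k 3)⁻¹^2 + (-1 : F)*μ⁻¹^2*(k 0)*(k 0)⁻¹*(k 3)^2*(k 3)⁻¹^2) * hka + ((-1 : F)*(k 0)⁻¹^2 + (-1 : F)*(k 0)^2 + μ⁻¹*(k 0)⁻¹*(k 3)⁻¹ + μ⁻¹*(k 0)⁻¹*(k 3) + μ⁻¹*(k 0)*(k 3)⁻¹ + μ⁻¹*(k 0)*(k 3) + (-1 : F)*μ⁻¹^2 + (-1 : F)*μ⁻¹^2*(k 3)*(k 3)⁻¹) * hkb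
  · -- second part : use Z = t1 * t2 = q⁻¹ • (s0 * s3)
    have hXi : (M.s 0 * M.s 3) * (M.t 3 * M.t 0) = 1 := by
      calc (M.s 0 * M.s 3) * (M.t 3 * M.t 0)
          = M.s 0 * ((M.s 3 * M.t 3) * M.t 0) := by noncomm_ring
      _ = 1 := by rw [M.st 3, one_mul, M.st 0]
    have hXiv : (M.s 0 * M.s 3) v = μ⁻¹ • v := by
      have h := DFunLike.congr_fun hXi v
      rw [Module.End.mul_apply, hvX, map_smul, Module.End.one_apply] at h
      calc (M.s 0 * M.s 3) v = μ⁻¹ • (μ • ((M.s 0 * M.s 3) v)) := by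
            rw [smul_smul, inv_mul_cancel₀ hμ, one_smul]
      _ = μ⁻¹ • v := by rw [h]
    have e1 : M.s 0 * (M.t 0 * M.t 1 * M.t 2 * M.t 3) * M.s 3
        = M.t 1 * M.t 2 := by
      calc M.s 0 * (M.t 0 * M.t 1 * M.t 2 * M.t 3) * M.s 3
          = (M.s 0 * M.t 0) * (M.t 1 * M.t 2) * (M.t 3 * M.s 3) := by
            noncomm_ring
      _ = M.t 1 * M.t 2 := by rw [M.st 0, M.ts 3, one_mul, mul_one]
    have hZ : M.t 1 * M.t 2 = q⁻¹ • (M.s 0 * M.s 3) := by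
      rw [← e1, M.prodEq, mul_smul_comm, smul_mul_assoc, mul_one]
    have hν : q⁻¹ * μ⁻¹ ≠ 0 := by
      simp [hq, hμ]
    have hZv : (M.t 1 * M.t 2) v = (q⁻¹ * μ⁻¹) • v := by
      rw [hZ, LinearMap.smul_apply, hXiv, smul_smul]
    have h2 := core_lemma (M.t 1) (M.t 2) (M.s 1) (M.s 2) (M.ts 1) (M.st 1)
      (M.ts 2) (M.st 2) _ _ (hk 1).2 (hk 2).2 (q⁻¹ * μ⁻¹) hν v hZv
    have hG2 : M.G2 = M.s 1 * (M.t 1 * M.t 2) - (M.t 1 * M.t 2) * M.s 1 := by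
      unfold HqMod.G2
      rw [← mul_assoc, M.st 1, one_mul, mul_assoc]
    rw [hG2, h2]
    congr 1
    unfold Gfun
    rw [show ((q⁻¹ * μ⁻¹)⁻¹ : F) = q * μ from by rw [mul_inv, inv_inv, inv_inv]]
    rw [show (((q * μ) ^ 2 : F))⁻¹ = q⁻¹ ^ 2 * μ⁻¹ ^ 2 from by
      rw [← inv_pow, mul_inv, mul_pow]]
    have hm : μ * μ⁻¹ = 1 := mul_inv_cancel₀ hμ
    have hqq : q * q⁻¹ = 1 := mul_inv_cancel₀ hq
    have hka : k 1 * (k 1)⁻¹ = 1 := mul_inv_cancel₀ hk1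
    have hkb : k 2 * (k 2)⁻¹ = 1 := mul_inv_cancel₀ hk2
    linear_combination ((2 : F)*q*q⁻¹ + (-1 : F)*(k 1)⁻¹^2*(k 2)*(k 2)⁻¹*q^2*q⁻¹^2 + (-1 : F)*(k 1)*(k 1)⁻¹*(k 2)⁻¹^2*q^2*q⁻¹^2 + (-2 : F)*(k 1)*(k 1)⁻¹*(k 2)*(k 2)⁻¹*q^2*q⁻¹^2 + (-1 : F)*(k 1)*(k 1)⁻¹*(k 2)^2*q^2*q⁻¹^2 + (-1 : F)*(k 1)^2*(k 2)*(k 2)⁻¹*q^2*q⁻¹^2 + μ⁻¹*(k 1)*(k 1)⁻¹^2*(k 2)*(k 2)⁻¹^2*q*q⁻¹^2 + μ⁻¹*(k 1)*(k 1)⁻¹^2*(k 2)^2*(k 2)⁻¹*q*q⁻¹^2 + μ⁻¹*(k 1)^2*(k 1)⁻¹*(k 2)*(k 2)⁻¹^2*q*q⁻¹^2 + μ⁻¹*(k 1)^2*(k 1)⁻¹*(k 2)^2*(k 2)⁻¹*q*q⁻¹^2 + μ*(k 1)⁻¹*(k 2)⁻¹*q^3*q⁻¹^2 + μ*(k 1)⁻¹*(k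 2)*q^3*q⁻¹^2 + μ*(k 1)*(k 2)⁻¹*q^3*q⁻¹^2 + μ*(k 1)*(k 2)*q^3*q⁻¹^2 + (-1 : F)*μ*μ⁻¹*(k 1)⁻¹^2*(k 2)*(k 2)⁻¹*q^2*q⁻¹^2 + (-1 : F)*μ*μ⁻¹*(k 1)*(k 1)⁻¹*(k 2)⁻¹^2*q^2*q⁻¹^2 + (-2 : F)*μ*μ⁻¹*(k 1)*(k 1)⁻¹*(k 2)*(k 2)⁻¹*q^2*q⁻¹^2 + (-1 : F)*μ*μ⁻¹*(k 1)*(k 1)⁻¹*(k 2)^2*q^2*q⁻¹^2 + (-1 : F)*μ*μ⁻¹*(k 1)^2*(k 2)*(k 2)⁻¹*q^2*q⁻¹^2 + (-1 : F)*μ^2*q^4*q⁻¹^2 + μ^2*μ⁻¹*(k 1)⁻¹*(k 2)⁻¹*q^3*q⁻¹^2 + μ^2*μ⁻¹*(k 1)⁻¹*(k 2)*q^3*q⁻¹^2 + μ^2*μ⁻¹*(k 1)*(k 2)⁻¹*q^3*q⁻¹^2 + μ^2*μ⁻¹*(k 1)*(k 2)*q^3*q⁻¹^2 + (-1 : F)*μ^3*μ⁻¹*q^4*q⁻¹^2)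 * hm + ((2 : F) + (-1 : F)*(k 1)⁻¹^2*(k 2)*(k 2)⁻¹ + (-1 : F)*(k 1)⁻¹^2*(k 2)*(k 2)⁻¹*q*q⁻¹ + (-1 : F)*(k 1)*(k 1)⁻¹*(k 2)⁻¹^2 + (-1 : F)*(k 1)*(k 1)⁻¹*(k 2)⁻¹^2*q*q⁻¹ + (-2 : F)*(k 1)*(k 1)⁻¹*(k 2)*(k 2)⁻¹ + (-2 : F)*(k 1)*(k 1)⁻¹*(k 2)*(k 2)⁻¹*q*q⁻¹ + (-1 : F)*(k 1)*(k 1)⁻¹*(k 2)^2 + (-1 : F)*(k 1)*(k 1)⁻¹*(k 2)^2*q*q⁻¹ + (-1 : F)*(k 1)^2*(k 2)*(k 2)⁻¹ + (-1 : F)*(k 1)^2*(k 2)*(k 2)⁻¹*q*q⁻¹ + μ⁻¹*(k 1)*(k 1)⁻¹^2*(k 2)*(k 2)⁻¹^2*q⁻¹ + μ⁻¹*(k 1)*(k 1)⁻¹^2*(k 2)^2*(k 2)⁻¹*q⁻¹ + μ⁻¹*(k 1)^2*(k 1)⁻¹*(k 2)*(k 2)⁻¹^2*q⁻¹ + μ⁻¹*(k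 1)^2*(k 1)⁻¹*(k 2)^2*(k 2)⁻¹*q⁻¹ + μ*(k 1)⁻¹*(k 2)⁻¹*q + μ*(k 1)⁻¹*(k 2)⁻¹*q^2*q⁻¹ + μ*(k 1)⁻¹*(k 2)*q + μ*(k 1)⁻¹*(k 2)*q^2*q⁻¹ + μ*(k 1)*(k 2)⁻¹*q + μ*(k 1)*(k 2)⁻¹*q^2*q⁻¹ + μ*(k 1)*(k 2)*q + μ*(k 1)*(k 2)*q^2*q⁻¹ + (-1 : F)*μ^2*q^2 + (-1 : F)*μ^2*q^3*q⁻¹) * hqq + ((2 : F) + (-1 : F)*(k 2)⁻¹^2 + (-2 : F)*(k 2)*(k 2)⁻¹ + (-1 : F)*(k 2)^2 + μ⁻¹*(k 1)⁻¹*(k 2)*(k 2)⁻¹^2*q⁻¹ + μ⁻¹*(k 1)⁻¹*(k 2)^2*(k 2)⁻¹*q⁻¹ + μ⁻¹*(k 1)*(k 2)*(k 2)⁻¹^2*q⁻¹ + μ⁻¹*(k 1)*(k 2)^2*(k 2)⁻¹*q⁻¹ + (-1 : F)*μ⁻¹^2*(k 2)^2*(k 2)⁻¹^2*q⁻¹^2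 + (-1 : F)*μ⁻¹^2*(k 1)*(k 1)⁻¹*(k 2)^2*(k 2)⁻¹^2*q⁻¹^2) * hka + ((-1 : F)*(k 1)⁻¹^2 + (-1 : F)*(k 1)^2 + μ⁻¹*(k 1)⁻¹*(k 2)⁻¹*q⁻¹ + μ⁻¹*(k 1)⁻¹*(k 2)*q⁻¹ + μ⁻¹*(k 1)*(k 2)⁻¹*q⁻¹ + μ⁻¹*(k 1)*(k 2)*q⁻¹ + (-1 : F)*μ⁻¹^2*q⁻¹^2 + (-1 : F)*μ⁻¹^2*(k 2)*(k 2)⁻¹*q⁻¹^2) * hkb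
end

section
/- Let V be an H_q-module with parameter sequence (k_0,k_1,k_2,k_3). Let μ ∈ F be nonzero with μ^2 ≠ 1, and let v ∈ V satisfy X v = μ v. Then: (μ − μ^{-1})·t_0 v = (μ(k_0 + k_0^{-1}) − (k_3 + k_3^{-1}))·v + μ·G_0 v; (μ^{-1} − μ)·t_0^{-1} v = (μ^{-1}(k_0 + k_0^{-1}) − (k_3 + k_3^{-1}))·v + μ·G_0 v; (μ^{-1} − μ)·t_3 v = ((k_0 + k_0^{-1}) − μ(k_3 + k_3^{-1}))·v + G_0 v; and (μ − μ^{-1})·t_3^{-1} v = ((k_0 + k_0^{-1}) − μ^{-1}(k_3 + k_3^{-1}))·v + G_0 v. -/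
theorem stmt9 {F : Type*} [Field F] [IsAlgClosed F] {q : F}
    (hq : q ≠ 0) (hqru : ∀ m : ℕ, 1 ≤ m → q ^ m ≠ 1)
    {V : Type*} [AddCommGroup V] [Module F V] [FiniteDimensional F V]
    (M : HqMod F q V) (k : Fin 4 → F) (hk : M.IsParamSeq k)
    (μ : F) (hμ0 : μ ≠ 0) (hμ1 : μ ^ 2 ≠ 1)
    (v : V) (hv : M.X v = μ • v) :
    (μ - μ⁻¹) • M.t 0 v = (μ * (k 0 + (k 0)⁻¹) - (k 3 + (k 3)⁻¹)) • v + μ • M.G0 v ∧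
    (μ⁻¹ - μ) • M.s 0 v = (μ⁻¹ * (k 0 + (k 0)⁻¹) - (k 3 + (k 3)⁻¹)) • v + μ • M.G0 v ∧
    (μ⁻¹ - μ) • M.t 3 v = ((k 0 + (k 0)⁻¹) - μ * (k 3 + (k 3)⁻¹)) • v + M.G0 v ∧
    (μ - μ⁻¹) • M.s 3 v = ((k 0 + (k 0)⁻¹) - μ⁻¹ * (k 3 + (k 3)⁻¹)) • v + M.G0 v := by

  obtain ⟨hk0, hsum0⟩ := hk 0
  obtain ⟨hk3, hsum3⟩ := hk 3
  set c0 := k 0 + (k 0)⁻¹ with hc0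
  set c3 := k 3 + (k 3)⁻¹ with hc3
  have happ0 : ∀ w : V, M.t 0 w + M.s 0 w = c0 • w := by
    intro w
    have := congrArg (fun f : Module.End F V => f w) hsum0
    simpa using this
  have happ3 : ∀ w : V, M.t 3 w + M.s 3 w = c3 • w := by
    intro w
    have := congrArg (fun f : Module.End F V => f w) hsum3
    simpa using this
  have hst3 : ∀ w : V, M.s 3 (M.t 3 w) = w := by
    intro w
    have := congrArg (fun f : Module.End F V => f w) (M.st 3)
    simpa [Module.End.mul_apply] using this
  have hts0 : ∀ w : V, M.t 0 (M.s 0 w) = w := by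
    intro w
    have := congrArg (fun f : Module.End F V => f w) (M.ts 0)
    simpa [Module.End.mul_apply] using this
  have h1 : M.t 3 (M.t 0 v) = μ • v := by
    simpa [HqMod.X, Module.End.mul_apply] using hv
  have hs3v : M.s 3 v = μ⁻¹ • M.t 0 v := by
    have h := congrArg (M.s 3) h1
    rw [hst3, map_smul] at h
    rw [h, smul_smul, inv_mul_cancel₀ hμ0, one_smul]
  have hs0v : M.s 0 v = c0 • v - M.t 0 v := eq_sub_of_add_eq' (happ0 v)
  have ht3v : M.t 3 v = c3 • v - μ⁻¹ • M.t 0 v := by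
    have h := happ3 v
    rw [hs3v] at h
    exact eq_sub_of_add_eq h
  have ht00 : M.t 0 (M.t 0 v) = c0 • M.t 0 v - v := by
    have h := congrArg (M.t 0) hs0v
    rw [hts0, map_sub, map_smul] at h
    rw [eq_sub_iff_add_eq] at h ⊢
    rw [add_comm]
    exact h
  have hG0 : M.G0 v = (1 - μ⁻¹ * μ⁻¹) • M.t 0 v + (μ⁻¹ * c3 - c0) • v := by
    have hG : M.G0 v = M.t 0 v - M.t 3 (M.t 0 (M.s 3 v)) := by
      simp [HqMod.G0, Module.End.mul_apply, LinearMap.sub_apply]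
    rw [hG, hs3v, map_smul, ht00, map_smul, map_sub, map_smul, h1, ht3v]
    match_scalars <;> field_simp <;> ring
  refine ⟨?_, ?_, ?_, ?_⟩
  · rw [hG0]
    match_scalars <;> field_simp <;> ring
  · rw [hs0v, hG0]
    match_scalars <;> field_simp <;> ring
  · rw [ht3v, hG0]
    match_scalars <;> field_simp <;> ring
  · rw [hs3v, hG0]
    match_scalars <;> field_simp <;> ring
end

section
/- Let V be an H_q-module with parameter sequence (k_0,k_1,k_2,k_3). Let μ ∈ F be nonzero with q^2 μ^2 ≠ 1, and let v ∈ V satisfy X v = μ v. Then: (q^{-1}μ^{-1} − qμ)·t_1 v = (q^{-1}μ^{-1}(k_1 + k_1^{-1}) − (k_2 + k_2^{-1}))·v − G_2 v; (qμ − q^{-1}μ^{-1})·t_1^{-1} v = (qμ(k_1 + k_1^{-1}) − (k_2 + k_2^{-1}))·v − G_2 v; (qμ − q^{-1}μ^{-1})·t_2 v = ((k_1 + k_1^{-1}) − q^{-1}μ^{-1}(k_2 + k_2^{-1}))·v − q^{-1}μ^{-1}·G_2 v; and (q^{-1}μ^{-1} − qμ)·t_2^{-1} v = ((k_1 + k_1^{-1})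 − qμ(k_2 + k_2^{-1}))·v − q^{-1}μ^{-1}·G_2 v. -/
theorem stmt10 {F : Type*} [Field F] [IsAlgClosed F] {q : F}
    (hq : q ≠ 0) (hqru : ∀ m : ℕ, 1 ≤ m → q ^ m ≠ 1)
    {V : Type*} [AddCommGroup V] [Module F V] [FiniteDimensional F V]
    (M : HqMod F q V) (k : Fin 4 → F) (hk : M.IsParamSeq k)
    (μ : F) (hμ0 : μ ≠ 0) (hμ1 : q ^ 2 * μ ^ 2 ≠ 1)
    (v : V) (hv : M.X v = μ • v) :
    (q⁻¹ * μ⁻¹ - q * μ) • M.t 1 v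
      = (q⁻¹ * μ⁻¹ * (k 1 + (k 1)⁻¹) - (k 2 + (k 2)⁻¹)) • v - M.G2 v ∧
    (q * μ - q⁻¹ * μ⁻¹) • M.s 1 v
      = (q * μ * (k 1 + (k 1)⁻¹) - (k 2 + (k 2)⁻¹)) • v - M.G2 v ∧
    (q * μ - q⁻¹ * μ⁻¹) • M.t 2 v
      = ((k 1 + (k 1)⁻¹) - q⁻¹ * μ⁻¹ * (k 2 + (k 2)⁻¹)) • v - (q⁻¹ * μ⁻¹) • M.G2 v ∧
    (q⁻¹ * μ⁻¹ - q * μ) • M.s 2 v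
      = ((k 1 + (k 1)⁻¹) - q * μ * (k 2 + (k 2)⁻¹)) • v - (q⁻¹ * μ⁻¹) • M.G2 v := by
  obtain ⟨hk1ne, hk1⟩ := hk 1
  obtain ⟨hk2ne, hk2⟩ := hk 2
  obtain ⟨α, hα⟩ : ∃ x : F, x = k 1 + (k 1)⁻¹ := ⟨_, rfl⟩
  obtain ⟨β, hβ⟩ : ∃ x : F, x = k 2 + (k 2)⁻¹ := ⟨_, rfl⟩
  rw [← hα] at hk1 ⊢
  rw [← hβ] at hk2 ⊢
  -- operator identities
  have hXiX : M.Xinv * M.X = 1 := by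
    show M.s 0 * M.s 3 * (M.t 3 * M.t 0) = 1
    rw [mul_assoc, ← mul_assoc (M.s 3), M.st, one_mul, M.st]
  have hXXi : M.X * M.Xinv = 1 := by
    show M.t 3 * M.t 0 * (M.s 0 * M.s 3) = 1
    rw [mul_assoc, ← mul_assoc (M.t 0), M.ts, one_mul, M.ts]
  have hE1 : M.t 1 * M.t 2 = q⁻¹ • M.Xinv := by
    have h0 : M.s 0 * (M.t 0 * M.t 1 * M.t 2 * M.t 3) * M.s 3
        = M.s 0 * ((q⁻¹ : F) • (1 : Module.End F V)) * M.s 3 := by rw [M.prodEq]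
    have hL : M.s 0 * (M.t 0 * M.t 1 * M.t 2 * M.t 3) * M.s 3 = M.t 1 * M.t 2 := by
      simp only [mul_assoc]
      rw [M.ts 3, mul_one, ← mul_assoc (M.s 0), M.st, one_mul]
    have hR : M.s 0 * ((q⁻¹ : F) • (1 : Module.End F V)) * M.s 3
        = q⁻¹ • M.Xinv := by
      show _ = q⁻¹ • (M.s 0 * M.s 3)
      rw [mul_smul_comm, mul_one, smul_mul_assoc]
    rw [← hL, h0, hR]
  have hbt2 : ((q : F) • (M.X * M.t 1)) * M.t 2 = 1 := by
    rw [smul_mul_assoc, mul_assoc, hE1, mul_smul_comm, smul_smul,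
      mul_inv_cancel₀ hq, one_smul, hXXi]
  have hs2 : M.s 2 = (q : F) • (M.X * M.t 1) := by
    calc M.s 2 = (((q : F) • (M.X * M.t 1)) * M.t 2) * M.s 2 := by rw [hbt2, one_mul]
    _ = ((q : F) • (M.X * M.t 1)) * (M.t 2 * M.s 2) := by rw [mul_assoc]
    _ = (q : F) • (M.X * M.t 1) := by rw [M.ts, mul_one]
  -- vector identities
  have hs1v : M.s 1 v = α • v - M.t 1 v := by
    have h := LinearMap.ext_iff.mp hk1 v
    simp only [LinearMap.add_apply, LinearMap.smul_apply, Module.End.one_apply] at h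
    exact eq_sub_of_add_eq' h
  have hXiv : M.Xinv v = μ⁻¹ • v := by
    have h := LinearMap.ext_iff.mp hXiX v
    simp only [Module.End.mul_apply, Module.End.one_apply] at h
    rw [hv, map_smul] at h
    have h2 := congrArg (fun x => μ⁻¹ • x) h
    simpa [smul_smul, inv_mul_cancel₀ hμ0] using h2
  have ht2v : M.t 2 v = (q⁻¹ * μ⁻¹) • (α • v - M.t 1 v) := by
    have h := LinearMap.ext_iff.mp hE1 v
    simp only [Module.End.mul_apply, LinearMap.smul_apply] at h
    rw [hXiv, smul_smul] at h
    have h2 : M.s 1 (M.t 1 (M.t 2 v)) = M.t 2 v := by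
      have := LinearMap.ext_iff.mp (M.st 1) (M.t 2 v)
      simpa [Module.End.mul_apply] using this
    rw [← h2, h, map_smul, hs1v]
  have hs2v : M.s 2 v = q • M.X (M.t 1 v) := by
    rw [hs2]
    simp [Module.End.mul_apply, LinearMap.smul_apply]
  have ht2s2 : M.t 2 v + M.s 2 v = β • v := by
    have h := LinearMap.ext_iff.mp hk2 v
    simpa [LinearMap.add_apply, LinearMap.smul_apply, Module.End.one_apply] using h
  have hXw : M.X (M.t 1 v)
      = (q⁻¹ * β - q⁻¹ * q⁻¹ * μ⁻¹ * α) • v + (q⁻¹ * q⁻¹ * μ⁻¹) • M.t 1 v := by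
    have h : q • M.X (M.t 1 v) = β • v - (q⁻¹ * μ⁻¹) • (α • v - M.t 1 v) := by
      rw [← hs2v, ← ht2v]; exact eq_sub_of_add_eq' ht2s2
    have h2 := congrArg (fun x => q⁻¹ • x) h
    simp only [smul_smul, inv_mul_cancel₀ hq, one_smul] at h2
    rw [h2]
    match_scalars <;> ring
  have hXiw : M.Xinv (M.t 1 v)
      = (q * q * μ) • (M.t 1 v - ((q⁻¹ * β - q⁻¹ * q⁻¹ * μ⁻¹ * α) * μ⁻¹) • v) := by
    have h3 : M.Xinv (M.X (M.t 1 v)) = M.t 1 v := by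
      have := LinearMap.ext_iff.mp hXiX (M.t 1 v)
      simpa [Module.End.mul_apply] using this
    rw [hXw, map_add, map_smul, map_smul, hXiv, smul_smul] at h3
    have h4 : (q⁻¹ * q⁻¹ * μ⁻¹) • M.Xinv (M.t 1 v)
        = M.t 1 v - ((q⁻¹ * β - q⁻¹ * q⁻¹ * μ⁻¹ * α) * μ⁻¹) • v := by
      rw [eq_sub_iff_add_eq, add_comm]; exact h3
    rw [← h4, smul_smul, show (q * q * μ) * (q⁻¹ * q⁻¹ * μ⁻¹) = 1 by
      field_simp, one_smul]
  have hG2v : M.G2 v = (q * μ - q⁻¹ * μ⁻¹) • M.t 1 v + (q⁻¹ * μ⁻¹ * α - β) • v := by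
    have hg : M.G2 v = M.t 2 v - (M.t 1 * M.t 2) (M.s 1 v) := by
      show (M.t 2 - M.t 1 * M.t 2 * M.s 1) v = _
      simp [LinearMap.sub_apply, Module.End.mul_apply]
    rw [hg, hE1, LinearMap.smul_apply, hs1v, map_sub, map_smul, hXiv, hXiw, ht2v]
    match_scalars <;> (try ring_nf) <;> (try field_simp) <;> (try ring)
  refine ⟨?_, ?_, ?_, ?_⟩
  · rw [hG2v]; match_scalars <;> (try ring_nf) <;> (try field_simp) <;> (try ring)
  · rw [hs1v, hG2v]; match_scalars <;> (try ring_nf) <;> (try field_simp) <;> (try ring)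
  · rw [ht2v, hG2v]; match_scalars <;> (try ring_nf) <;> (try field_simp) <;> (try ring)
  · rw [hs2v, hXw, hG2v]; match_scalars <;> (try ring_nf) <;> (try field_simp) <;> (try ring_nf) <;> (try field_simp) <;> (try ring)
end

section
/- Let V be an XD H_q-module and let μ, ν ∈ F. (i) If μν = 1, then the subspace V_X(μ) + V_X(ν) is invariant under t_0. (ii) If μν = q^{−2}, then the subspace V_X(μ) + V_X(ν) is invariant under t_2. -/
section Aux

variable {F : Type*} [Field F] {V : Type*} [AddCommGroup V] [Module F V]

lemma comm_apply_eig {c X : Module.End F V} (h : Commute c X) {μ : F} {v : V}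
    (hv : X v = μ • v) : X (c v) = μ • (c v) := by
  have : X (c v) = c (X v) := by
    rw [← Module.End.mul_apply, ← h.eq, Module.End.mul_apply]
  rw [this, hv, map_smul]

/-- If `(X - μ)(X - ν) w = 0` (in the factored form below) and `X` is diagonalizable,
then `w` lies in the sum of the `μ`- and `ν`-eigenspaces. -/
lemma quad_mem_sup (X : Module.End F V) (hX : Diagonalizable X) (μ ν : F) (w : V)
    (h : X (X w - ν • w) = μ • (X w - ν • w)) :
    w ∈ Module.End.eigenspace X μ ⊔ Module.End.eigenspace X ν := by
  by_cases hμν : μ = ν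
  · -- double eigenvalue: use independence of eigenspaces
    subst hμν
    set u := X w - μ • w with hu_def
    have hu : u ∈ Module.End.eigenspace X μ := Module.End.mem_eigenspace_iff.mpr h
    have hT : u ∈ ⨆ (lam : F) (_ : lam ≠ μ), Module.End.eigenspace X lam := by
      have hw : w ∈ ⨆ lam : F, Module.End.eigenspace X lam := by
        rw [hX]; exact Submodule.mem_top
      refine Submodule.iSup_induction (motive := fun x =>
        X x - μ • x ∈ ⨆ (lam : F) (_ : lam ≠ μ), Module.End.eigenspace X lam)
        (fun lam => Module.End.eigenspace X lam) hw ?_ ?_ ?_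
      · intro lam x hx
        have hx' : X x = lam • x := Module.End.mem_eigenspace_iff.mp hx
        have hxx : X x - μ • x = (lam - μ) • x := by rw [hx', sub_smul]
        by_cases hlm : lam = μ
        · rw [hxx, hlm, sub_self, zero_smul]; exact Submodule.zero_mem _
        · rw [hxx]
          exact Submodule.mem_iSup_of_mem lam (Submodule.mem_iSup_of_mem hlm
            (Submodule.smul_mem _ _ hx))
      · simp
      · intro x y hx hy
        have : X (x + y) - μ • (x + y) = (X x - μ • x) + (X y - μ • y) := by
          rw [map_add]; module
        rw [this]; exact Submodule.add_mem _ hx hy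
    have hdis := X.eigenspaces_iSupIndep μ
    have hu0 : u = 0 := Submodule.disjoint_def.mp hdis u hu hT
    have : w ∈ Module.End.eigenspace X μ := by
      refine Module.End.mem_eigenspace_iff.mpr ?_
      have := sub_eq_zero.mp hu0
      exact this
    exact Submodule.mem_sup_left this
  · -- distinct eigenvalues
    have ha : X w - ν • w ∈ Module.End.eigenspace X μ := Module.End.mem_eigenspace_iff.mpr h
    have hXX : X (X w) = μ • X w + ν • X w - (μ * ν) • w := by
      have h' := h
      rw [map_sub, map_smul] at h'
      linear_combination (norm := module) h'
    have hb : X w - μ • w ∈ Module.End.eigenspace X ν := by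
      refine Module.End.mem_eigenspace_iff.mpr ?_
      rw [map_sub, map_smul, hXX]
      module
    have hw : w = (μ - ν)⁻¹ • ((X w - ν • w) - (X w - μ • w)) := by
      have h1 : (X w - ν • w) - (X w - μ • w) = (μ - ν) • w := by module
      rw [h1, smul_smul, inv_mul_cancel₀ (sub_ne_zero.mpr hμν), one_smul]
    rw [hw]
    exact Submodule.smul_mem _ _ (sub_mem (Submodule.mem_sup_left ha)
      (Submodule.mem_sup_right hb))

end Aux

namespace HqMod

variable {F : Type*} [Field F] {q : F} {V : Type*} [AddCommGroup V] [Module F V]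

lemma X_mul_Xinv (M : HqMod F q V) : M.X * M.Xinv = 1 := by
  show M.t 3 * M.t 0 * (M.s 0 * M.s 3) = 1
  rw [mul_assoc, ← mul_assoc (M.t 0), M.ts 0, one_mul, M.ts 3]

lemma Xinv_mul_X (M : HqMod F q V) : M.Xinv * M.X = 1 := by
  show M.s 0 * M.s 3 * (M.t 3 * M.t 0) = 1
  rw [mul_assoc, ← mul_assoc (M.s 3), M.st 3, one_mul, M.st 0]

lemma Xinv_apply_eig (M : HqMod F q V) {μ : F} (hμ : μ ≠ 0) {v : V}
    (hv : M.X v = μ • v) : M.Xinv v = μ⁻¹ • v := by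
  have h1 : M.Xinv (M.X v) = v := by
    rw [← Module.End.mul_apply, M.Xinv_mul_X, Module.End.one_apply]
  rw [hv, map_smul] at h1
  calc M.Xinv v = μ⁻¹ • (μ • M.Xinv v) := by rw [smul_smul, inv_mul_cancel₀ hμ, one_smul]
    _ = μ⁻¹ • v := by rw [h1]

lemma commX (M : HqMod F q V) (i : Fin 4) : Commute (M.t i + M.s i) M.X :=
  (M.central i 3).mul_right (M.central i 0)

/-- `t 0` maps an `X`-eigenvector with eigenvalue `μ` into `V_X(μ) + V_X(μ⁻¹)`. -/
lemma t0_eig (M : HqMod F q V) (hX : Diagonalizable M.X) {μ : F} (hμ : μ ≠ 0) {v : V}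
    (hv : v ∈ Module.End.eigenspace M.X μ) :
    M.t 0 v ∈ Module.End.eigenspace M.X μ ⊔ Module.End.eigenspace M.X μ⁻¹ := by
  have hv' : M.X v = μ • v := Module.End.mem_eigenspace_iff.mp hv
  set a := (M.t 0 + M.s 0) v with ha_def
  set b := (M.t 3 + M.s 3) v with hb_def
  have ha : M.X a = μ • a := comm_apply_eig (M.commX 0) hv'
  have hb : M.X b = μ • b := comm_apply_eig (M.commX 3) hv'
  -- s 3 = t 0 * Xinv
  have hs3 : M.t 0 * M.Xinv = M.s 3 := by
    show M.t 0 * (M.s 0 * M.s 3) = M.s 3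
    rw [← mul_assoc, M.ts 0, one_mul]
  have hs3v : M.s 3 v = μ⁻¹ • M.t 0 v := by
    rw [← hs3, Module.End.mul_apply, M.Xinv_apply_eig hμ hv', map_smul]
  -- X * t0 = X * (t0 + s0) - t3
  have hop : M.X * M.t 0 = M.X * (M.t 0 + M.s 0) - M.t 3 := by
    have h1 : M.X * M.s 0 = M.t 3 := by
      show M.t 3 * M.t 0 * M.s 0 = M.t 3
      rw [mul_assoc, M.ts 0, mul_one]
    rw [mul_add, h1]; abel
  have hXw : M.X (M.t 0 v) = μ • a - b + μ⁻¹ • M.t 0 v := by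
    have h0 := congrArg (fun f : Module.End F V => f v) hop
    simp only [Module.End.mul_apply, LinearMap.sub_apply] at h0
    rw [h0, ← ha_def, ha]
    have ht3v : M.t 3 v = b - μ⁻¹ • M.t 0 v := by
      rw [hb_def]; simp only [LinearMap.add_apply]
      rw [hs3v]; abel
    rw [ht3v]; abel
  refine quad_mem_sup M.X hX μ μ⁻¹ (M.t 0 v) ?_
  have hz : M.X (M.t 0 v) - μ⁻¹ • M.t 0 v = μ • a - b := by rw [hXw]; abel
  rw [hz, map_sub, map_smul, ha, hb]
  module

/-- `t 2` maps an `X`-eigenvector with eigenvalue `μ` into `V_X(μ) + V_X(q⁻²μ⁻¹)`. -/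
lemma t2_eig (M : HqMod F q V) (hq : q ≠ 0) (hX : Diagonalizable M.X) {μ : F} (hμ : μ ≠ 0)
    {v : V} (hv : v ∈ Module.End.eigenspace M.X μ) :
    M.t 2 v ∈ Module.End.eigenspace M.X μ ⊔ Module.End.eigenspace M.X ((q ^ 2)⁻¹ * μ⁻¹) := by
  have hv' : M.X v = μ • v := Module.End.mem_eigenspace_iff.mp hv
  set a := (M.t 2 + M.s 2) v with ha_def
  set b := (M.t 1 + M.s 1) v with hb_def
  have ha : M.X a = μ • a := comm_apply_eig (M.commX 2) hv'
  have hb : M.X b = μ • b := comm_apply_eig (M.commX 1) hv'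
  -- t1 * t2 = q⁻¹ • Xinv
  have h12 : M.t 1 * M.t 2 = q⁻¹ • M.Xinv := by
    have h1 : M.s 0 * (M.t 0 * M.t 1 * M.t 2 * M.t 3) * M.s 3 = M.t 1 * M.t 2 := by
      simp only [mul_assoc]
      rw [M.ts 3, mul_one, ← mul_assoc (M.s 0), M.st 0, one_mul]
    rw [M.prodEq] at h1
    rw [← h1]
    show M.s 0 * (q⁻¹ • 1) * M.s 3 = q⁻¹ • (M.s 0 * M.s 3)
    rw [mul_smul_comm, mul_one, smul_mul_assoc]
  -- s 1 = q • (t2 * X)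
  have hs1 : M.s 1 = q • (M.t 2 * M.X) := by
    have h1inv : M.t 1 * (q • (M.t 2 * M.X)) = 1 := by
      rw [mul_smul_comm, ← mul_assoc, h12, smul_mul_assoc, smul_smul,
        mul_inv_cancel₀ hq, one_smul, M.Xinv_mul_X]
    calc M.s 1 = M.s 1 * (M.t 1 * (q • (M.t 2 * M.X))) := by rw [h1inv, mul_one]
      _ = (M.s 1 * M.t 1) * (q • (M.t 2 * M.X)) := by rw [mul_assoc]
      _ = q • (M.t 2 * M.X) := by rw [M.st 1, one_mul]
  have hs1v : M.s 1 v = (q * μ) • M.t 2 v := by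
    rw [hs1]
    show (q • (M.t 2 * M.X)) v = (q * μ) • M.t 2 v
    rw [LinearMap.smul_apply, Module.End.mul_apply, hv', map_smul, smul_smul]
  -- Xinv (t2 v) = μ⁻¹ • a - q • b + (q^2 * μ) • t2 v
  have hXinvw : M.Xinv (M.t 2 v) = μ⁻¹ • a - q • b + (q ^ 2 * μ) • M.t 2 v := by
    have hXinv' : M.Xinv = q • (M.t 1 * M.t 2) := by
      rw [h12, smul_smul, mul_inv_cancel₀ hq, one_smul]
    have ht2sq : M.t 2 (M.t 2 v) = M.t 2 a - v := by
      rw [ha_def]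
      have : M.t 2 ((M.t 2 + M.s 2) v) = M.t 2 (M.t 2 v) + (M.t 2 * M.s 2) v := by
        simp only [LinearMap.add_apply, map_add, Module.End.mul_apply]
      rw [this, M.ts 2, Module.End.one_apply]; abel
    have hXinva : M.Xinv a = μ⁻¹ • a := M.Xinv_apply_eig hμ ha
    have ht12a : M.t 1 (M.t 2 a) = (q⁻¹ * μ⁻¹) • a := by
      rw [← Module.End.mul_apply, h12, LinearMap.smul_apply, hXinva, smul_smul]
    have ht1v : M.t 1 v = b - (q * μ) • M.t 2 v := by
      rw [hb_def]; simp only [LinearMap.add_apply]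
      rw [hs1v]; abel
    rw [hXinv', LinearMap.smul_apply, Module.End.mul_apply, ht2sq, map_sub, ht12a, ht1v,
      smul_sub, smul_smul, smul_sub, smul_smul, ← mul_assoc, mul_inv_cancel₀ hq, one_mul]
    have hq2 : q * (q * μ) = q ^ 2 * μ := by ring
    rw [hq2]
    abel
  -- apply X to both sides
  have hrel : (q ^ 2 * μ) • M.X (M.t 2 v) = M.t 2 v - a + (q * μ) • b := by
    have h1 : M.X (M.Xinv (M.t 2 v)) = M.t 2 v := by
      rw [← Module.End.mul_apply, M.X_mul_Xinv, Module.End.one_apply]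
    rw [hXinvw] at h1
    rw [map_add, map_sub, map_smul, map_smul, map_smul, ha, hb] at h1
    have h2 : (q ^ 2 * μ) • M.X (M.t 2 v) = M.t 2 v - (μ⁻¹ * μ) • a + (q * μ) • b := by
      linear_combination (norm := module) h1
    rw [inv_mul_cancel₀ hμ, one_smul] at h2
    exact h2
  set ν : F := (q ^ 2)⁻¹ * μ⁻¹ with hν_def
  have hq2μ : q ^ 2 * μ ≠ 0 := mul_ne_zero (pow_ne_zero 2 hq) hμ
  refine quad_mem_sup M.X hX μ ν (M.t 2 v) ?_
  -- first show the scaled version, then cancel the nonzero scalar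
  have hscaled : (q ^ 2 * μ) • (M.X (M.t 2 v) - ν • M.t 2 v) = -a + (q * μ) • b := by
    rw [smul_sub, hrel, smul_smul]
    have : q ^ 2 * μ * ν = 1 := by
      rw [hν_def]; field_simp
    rw [this, one_smul]; abel
  have hgoal : (q ^ 2 * μ) • M.X (M.X (M.t 2 v) - ν • M.t 2 v) =
      (q ^ 2 * μ) • (μ • (M.X (M.t 2 v) - ν • M.t 2 v)) := by
    rw [← map_smul, hscaled, map_add, map_neg, map_smul, ha, hb, smul_comm (q^2*μ) μ,
      hscaled]
    module
  exact smul_right_injective V hq2μ hgoal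

end HqMod

theorem stmt12 {F : Type*} [Field F] [IsAlgClosed F] {q : F}
    (hq : q ≠ 0) (hqru : ∀ m : ℕ, 1 ≤ m → q ^ m ≠ 1)
    {V : Type*} [AddCommGroup V] [Module F V] [FiniteDimensional F V]
    (M : HqMod F q V) (hirr : M.Irreducible) (hX : Diagonalizable M.X)
    (μ ν : F) :
    (μ * ν = 1 →
      ∀ v ∈ Module.End.eigenspace M.X μ ⊔ Module.End.eigenspace M.X ν,
        M.t 0 v ∈ Module.End.eigenspace M.X μ ⊔ Module.End.eigenspace M.X ν) ∧
    (μ * ν = (q ^ 2)⁻¹ →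
      ∀ v ∈ Module.End.eigenspace M.X μ ⊔ Module.End.eigenspace M.X ν,
        M.t 2 v ∈ Module.End.eigenspace M.X μ ⊔ Module.End.eigenspace M.X ν) := by
  constructor
  · intro hμν v hv
    have h0 : μ * ν ≠ 0 := hμν ▸ (one_ne_zero : (1 : F) ≠ 0)
    have hμ0 : μ ≠ 0 := left_ne_zero_of_mul h0
    have hν0 : ν ≠ 0 := right_ne_zero_of_mul h0
    have hνinv : μ⁻¹ = ν := inv_eq_of_mul_eq_one_right hμν
    have hμinv : ν⁻¹ = μ := inv_eq_of_mul_eq_one_left hμν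
    obtain ⟨a, ha, b, hb, rfl⟩ := Submodule.mem_sup.mp hv
    rw [map_add]
    refine Submodule.add_mem _ ?_ ?_
    · have := M.t0_eig hX hμ0 ha
      rwa [hνinv] at this
    · have := M.t0_eig hX hν0 hb
      rw [hμinv] at this
      rwa [sup_comm] at this
  · intro hμν v hv
    have hq2 : (q ^ 2)⁻¹ ≠ 0 := inv_ne_zero (pow_ne_zero 2 hq)
    have h0 : μ * ν ≠ 0 := hμν ▸ hq2
    have hμ0 : μ ≠ 0 := left_ne_zero_of_mul h0
    have hν0 : ν ≠ 0 := right_ne_zero_of_mul h0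
    have hνinv : (q ^ 2)⁻¹ * μ⁻¹ = ν := by
      rw [← hμν, mul_comm μ ν, mul_assoc, mul_inv_cancel₀ hμ0, mul_one]
    have hμinv : (q ^ 2)⁻¹ * ν⁻¹ = μ := by
      rw [← hμν, mul_assoc, mul_inv_cancel₀ hν0, mul_one]
    obtain ⟨a, ha, b, hb, rfl⟩ := Submodule.mem_sup.mp hv
    rw [map_add]
    refine Submodule.add_mem _ ?_ ?_
    · have := M.t2_eig hq hX hμ0 ha
      rwa [hνinv] at this
    · have := M.t2_eig hq hX hν0 hb
      rw [hμinv] at this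
      rwa [sup_comm] at this
end

section
/- Let V be an XD H_q-module and let μ be an eigenvalue of X on V. (i) If μ^{−1} is not an eigenvalue of X on V, then G_0 v = 0 for every v ∈ V_X(μ). (ii) If q^{−2}μ^{−1} is not an eigenvalue of X on V, then G_2 v = 0 for every v ∈ V_X(μ). -/
lemma mykey {R : Type*} [Ring R] {a a' b b' : R}
    (haa' : a * a' = 1) (ha'a : a' * a = 1) (hbb' : b * b' = 1) (hb'b : b' * b = 1)
    (hab : (a + a') * b = b * (a + a')) (hba : (b + b') * a = a * (b + b')) :
    (a - b * a * b') * (b * a) = (a' * b') * (a - b * a * b') := by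
  have Ka : ∀ x : R, a * (a' * x) = x := fun x => by rw [← mul_assoc, haa', one_mul]
  have Ka' : ∀ x : R, a' * (a * x) = x := fun x => by rw [← mul_assoc, ha'a, one_mul]
  have Kb : ∀ x : R, b * (b' * x) = x := fun x => by rw [← mul_assoc, hbb', one_mul]
  have Kb' : ∀ x : R, b' * (b * x) = x := fun x => by rw [← mul_assoc, hb'b, one_mul]
  have h1 : a * b + a' * b = b * a + b * a' := by
    have h := hab; rw [add_mul, mul_add] at h; exact h
  have h2 : b * a + b' * a = a * b + a * b' := by
    have h := hba; rw [add_mul, mul_add] at h; exact h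
  have C1 : a * b - b * a = b * a' - a' * b := by
    rw [sub_eq_sub_iff_add_eq_add, h1]; abel
  have C2 : b' * a - a * b' = a * b - b * a := by
    rw [sub_eq_sub_iff_add_eq_add]
    calc b' * a + b * a = b * a + b' * a := by abel
      _ = a * b + a * b' := h2
  have main : a * (a * (b * a)) - a * (b * (a * a)) = b' * a - a * b' := by
    have e : a * (a * (b * a)) - a * (b * (a * a)) = a * ((a * b - b * a) * a) := by
      noncomm_ring
    rw [e, C1]
    simp only [sub_mul, mul_sub, mul_assoc, Ka, Ka', ha'a, haa', mul_one]
    exact C2.symm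
  have cancel : a * (b * a) - b * (a * a) = a' * (b' * a) - b' := by
    calc a * (b * a) - b * (a * a)
        = a' * (a * (a * (b * a)) - a * (b * (a * a))) := by
          rw [mul_sub, Ka', Ka']
      _ = a' * (b' * a - a * b') := by rw [main]
      _ = a' * (b' * a) - b' := by rw [mul_sub, Ka']
  calc (a - b * a * b') * (b * a)
      = a * (b * a) - b * (a * a) := by
        simp only [sub_mul, mul_assoc, Kb']
    _ = a' * (b' * a) - b' := cancel
    _ = (a' * b') * (a - b * a * b') := by
        simp only [mul_sub, mul_assoc, Kb', Ka']


theorem stmt13 {F : Type*} [Field F] [IsAlgClosed F] {q : F}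
    (hq : q ≠ 0) (hqru : ∀ m : ℕ, 1 ≤ m → q ^ m ≠ 1)
    {V : Type*} [AddCommGroup V] [Module F V] [FiniteDimensional F V]
    (M : HqMod F q V) (hirr : M.Irreducible) (hX : Diagonalizable M.X)
    (μ : F) (hμ : Module.End.HasEigenvalue M.X μ) :
    (¬ Module.End.HasEigenvalue M.X μ⁻¹ →
      ∀ v ∈ Module.End.eigenspace M.X μ, M.G0 v = 0) ∧
    (¬ Module.End.HasEigenvalue M.X ((q ^ 2)⁻¹ * μ⁻¹) →
      ∀ v ∈ Module.End.eigenspace M.X μ, M.G2 v = 0) := by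
  have hXXinv : M.X * M.Xinv = 1 := by
    have e : M.X * M.Xinv = M.t 3 * ((M.t 0 * M.s 0) * M.s 3) := by
      show (M.t 3 * M.t 0) * (M.s 0 * M.s 3) = _
      noncomm_ring
    rw [e, M.ts 0, one_mul, M.ts 3]
  have hXinvX : M.Xinv * M.X = 1 := by
    have e : M.Xinv * M.X = M.s 0 * ((M.s 3 * M.t 3) * M.t 0) := by
      show (M.s 0 * M.s 3) * (M.t 3 * M.t 0) = _
      noncomm_ring
    rw [e, M.st 3, one_mul, M.st 0]
  -- μ ≠ 0
  have hμ0 : μ ≠ 0 := by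
    obtain ⟨u, hu⟩ := hμ.exists_hasEigenvector
    intro h0
    have hXu : M.X u = 0 := by rw [hu.apply_eq_smul, h0, zero_smul]
    have : u = 0 := by
      have := LinearMap.congr_fun hXinvX u
      rw [Module.End.mul_apply, hXu, map_zero] at this
      simpa using this.symm
    exact hu.2 this
  -- Xinv eigen action
  have hXinvEig : ∀ v ∈ Module.End.eigenspace M.X μ, M.Xinv v = μ⁻¹ • v := by
    intro v hv
    have hXv : M.X v = μ • v := Module.End.mem_eigenspace_iff.mp hv
    have h1 : v = μ • M.Xinv v := by
      have := LinearMap.congr_fun hXinvX v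
      rw [Module.End.mul_apply, hXv, map_smul] at this
      simpa using this.symm
    calc M.Xinv v = μ⁻¹ • (μ • M.Xinv v) := by
          rw [smul_smul, inv_mul_cancel₀ hμ0, one_smul]
      _ = μ⁻¹ • v := by rw [← h1]
  constructor
  · -- part (i)
    intro h v hv
    by_contra h0
    have key0 : M.G0 * M.X = M.Xinv * M.G0 :=
      mykey (M.ts 0) (M.st 0) (M.ts 3) (M.st 3) (M.central 0 3).eq (M.central 3 0).eq
    have hXv : M.X v = μ • v := Module.End.mem_eigenspace_iff.mp hv
    have hw : M.Xinv (M.G0 v) = μ • M.G0 v := by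
      have := LinearMap.congr_fun key0 v
      rw [Module.End.mul_apply, Module.End.mul_apply, hXv, map_smul] at this
      exact this.symm
    have hXw : M.X (M.G0 v) = μ⁻¹ • M.G0 v := by
      have h1 : M.G0 v = μ • M.X (M.G0 v) := by
        have := LinearMap.congr_fun hXXinv (M.G0 v)
        rw [Module.End.mul_apply, hw, map_smul] at this
        simpa using this.symm
      calc M.X (M.G0 v) = μ⁻¹ • (μ • M.X (M.G0 v)) := by
            rw [smul_smul, inv_mul_cancel₀ hμ0, one_smul]
        _ = μ⁻¹ • M.G0 v := by rw [← h1]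
    exact h (Module.End.hasEigenvalue_of_hasEigenvector
      ⟨Module.End.mem_eigenspace_iff.mpr hXw, h0⟩)
  · -- part (ii)
    intro h v hv
    by_contra h0
    have key2 : M.G2 * (M.t 1 * M.t 2) = (M.s 2 * M.s 1) * M.G2 :=
      mykey (M.ts 2) (M.st 2) (M.ts 1) (M.st 1) (M.central 2 1).eq (M.central 1 2).eq
    have ht12 : M.t 1 * M.t 2 = q⁻¹ • M.Xinv := by
      have e : M.s 0 * (M.t 0 * M.t 1 * M.t 2 * M.t 3) * M.s 3
          = (M.s 0 * M.t 0) * (M.t 1 * M.t 2) * (M.t 3 * M.s 3) := by noncomm_ring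
      have e2 : M.s 0 * (M.t 0 * M.t 1 * M.t 2 * M.t 3) * M.s 3
          = q⁻¹ • M.Xinv := by
        rw [M.prodEq, mul_smul_comm, smul_mul_assoc, mul_one]
        rfl
      rw [e, M.st 0, M.ts 3, one_mul, mul_one] at e2
      exact e2
    have hs21 : M.s 2 * M.s 1 = q • M.X := by
      have h1 : (q • M.X) * (M.t 1 * M.t 2) = 1 := by
        rw [ht12, smul_mul_assoc, mul_smul_comm, hXXinv, smul_smul,
          mul_inv_cancel₀ hq, one_smul]
      have h2 : (M.t 1 * M.t 2) * (M.s 2 * M.s 1) = 1 := by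
        have e : (M.t 1 * M.t 2) * (M.s 2 * M.s 1)
            = M.t 1 * ((M.t 2 * M.s 2) * M.s 1) := by noncomm_ring
        rw [e, M.ts 2, one_mul, M.ts 1]
      exact (left_inv_eq_right_inv h1 h2).symm
    rw [ht12, hs21] at key2
    -- key2 : M.G2 * (q⁻¹ • M.Xinv) = (q • M.X) * M.G2
    have hXv : M.X v = μ • v := Module.End.mem_eigenspace_iff.mp hv
    have hXinvv : M.Xinv v = μ⁻¹ • v := hXinvEig v hv
    have hXw : M.X (M.G2 v) = ((q ^ 2)⁻¹ * μ⁻¹) • M.G2 v := by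
      have hk := LinearMap.congr_fun key2 v
      rw [Module.End.mul_apply, Module.End.mul_apply, LinearMap.smul_apply,
        LinearMap.smul_apply, hXinvv] at hk
      simp only [map_smul] at hk
      -- hk : q⁻¹ • μ⁻¹ • M.G2 v = q • M.X (M.G2 v)
      have hscal : (q ^ 2)⁻¹ * μ⁻¹ = q⁻¹ * (q⁻¹ * μ⁻¹) := by
        rw [sq, mul_inv]; ring
      rw [hscal, ← smul_smul, ← smul_smul, hk, smul_smul, inv_mul_cancel₀ hq, one_smul]
    exact h (Module.End.hasEigenvalue_of_hasEigenvector
      ⟨Module.End.mem_eigenspace_iff.mpr hXw, h0⟩)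
end

section
/- Let V be an XD H_q-module with parameter sequence (k_0,k_1,k_2,k_3), let μ be an eigenvalue of X on V and let v ∈ V_X(μ). (i) If μ^2 ≠ 1, then the subspace of V spanned by v and G_0 v is invariant under t_0. (ii) If q^2 μ^2 ≠ 1, then the subspace of V spanned by v and G_2 v is invariant under t_2. -/
lemma keyLemma {F : Type*} [Field F] {V : Type*} [AddCommGroup V] [Module F V]
    (a b : Module.End F V) (ca cb μ : F)
    (hsa : ∀ w, a (a w) = ca • a w - w)
    (hsb : ∀ w, b (b w) = cb • b w - w)
    (hμ0 : μ ≠ 0) (hμ : μ ^ 2 ≠ 1)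
    (v : V) (hv : b (a v) = μ • v) :
    ∀ w ∈ Submodule.span F ({v, a v - b (a (cb • v - b v))} : Set V),
      a w ∈ Submodule.span F ({v, a v - b (a (cb • v - b v))} : Set V) := by
  set u := b v with hu
  set g := a v - b (a (cb • v - b v)) with hg
  have hbu : b u = cb • u - v := by simpa [← hu] using hsb v
  have hinv : b (a (μ⁻¹ • v)) = v := by
    rw [map_smul, map_smul, hv, smul_smul, inv_mul_cancel₀ hμ0, one_smul]
  have h2 : a (μ⁻¹ • v) = cb • v - u := by
    have h := hsb (a (μ⁻¹ • v))
    rw [hinv, ← hu] at h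
    linear_combination (norm := module) h
  have h3 : a (cb • v - u) = ca • (cb • v) - ca • u - μ⁻¹ • v := by
    have h := hsa (μ⁻¹ • v)
    rw [h2] at h
    rw [h]
    module
  have hav : a v = (cb * μ) • v - μ • u := by
    have h := hsb (a v)
    rw [hv, map_smul, ← hu] at h
    linear_combination (norm := module) h
  have hau : a u = (μ⁻¹ - ca * cb + cb * cb * μ) • v + (ca - cb * μ) • u := by
    have h : a (cb • v - u) = cb • a v - a u := by rw [map_sub, map_smul]
    rw [h3, hav] at h
    linear_combination (norm := module) h
  have hGv : g = (cb * μ - ca) • v + (μ⁻¹ - μ) • u := by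
    rw [hg, h3]
    simp only [map_sub, map_smul, hbu, ← hu]
    rw [hav]
    module
  have hne : μ⁻¹ - μ ≠ 0 := by
    intro h
    have h1 : μ⁻¹ = μ := sub_eq_zero.mp h
    refine hμ ?_
    rw [sq]
    nth_rewrite 2 [← h1]
    exact mul_inv_cancel₀ hμ0
  intro w hw
  set W := Submodule.span F ({v, g} : Set V) with hW
  have hvW : v ∈ W := Submodule.subset_span (by simp)
  have hgW : g ∈ W := Submodule.subset_span (by simp)
  have huW : u ∈ W := by
    have he : u = (μ⁻¹ - μ)⁻¹ • (g - (cb * μ - ca) • v) := by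
      rw [hGv, add_sub_cancel_left, smul_smul, inv_mul_cancel₀ hne, one_smul]
    rw [he]
    exact W.smul_mem _ (W.sub_mem hgW (W.smul_mem _ hvW))
  have havW : a v ∈ W := by
    rw [hav]; exact W.sub_mem (W.smul_mem _ hvW) (W.smul_mem _ huW)
  have hauW : a u ∈ W := by
    rw [hau]; exact W.add_mem (W.smul_mem _ hvW) (W.smul_mem _ huW)
  have hagW : a g ∈ W := by
    rw [hGv, map_add, map_smul, map_smul]
    exact W.add_mem (W.smul_mem _ havW) (W.smul_mem _ hauW)
  obtain ⟨α, β, rfl⟩ := Submodule.mem_span_pair.mp hw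
  rw [map_add, map_smul, map_smul]
  exact W.add_mem (W.smul_mem _ havW) (W.smul_mem _ hagW)

theorem stmt14 {F : Type*} [Field F] [IsAlgClosed F] {q : F}
    (hq : q ≠ 0) (hqru : ∀ m : ℕ, 1 ≤ m → q ^ m ≠ 1)
    {V : Type*} [AddCommGroup V] [Module F V] [FiniteDimensional F V]
    (M : HqMod F q V) (hirr : M.Irreducible) (hX : Diagonalizable M.X)
    (k : Fin 4 → F) (hk : M.IsParamSeq k)
    (μ : F) (hμ : Module.End.HasEigenvalue M.X μ)
    (v : V) (hv : v ∈ Module.End.eigenspace M.X μ) :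
    (μ ^ 2 ≠ 1 →
      ∀ w ∈ Submodule.span F ({v, M.G0 v} : Set V),
        M.t 0 w ∈ Submodule.span F ({v, M.G0 v} : Set V)) ∧
    (q ^ 2 * μ ^ 2 ≠ 1 →
      ∀ w ∈ Submodule.span F ({v, M.G2 v} : Set V),
        M.t 2 w ∈ Submodule.span F ({v, M.G2 v} : Set V)) := by
  have hts : ∀ i w, M.t i (M.s i w) = w := fun i w => by
    simpa [Module.End.mul_apply] using DFunLike.congr_fun (M.ts i) w
  have hst : ∀ i w, M.s i (M.t i w) = w := fun i w => by
    simpa [Module.End.mul_apply] using DFunLike.congr_fun (M.st i) w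
  have hsv : ∀ i w, M.s i w = (k i + (k i)⁻¹) • w - M.t i w := fun i w => by
    have h := DFunLike.congr_fun (hk i).2 w
    simp only [LinearMap.add_apply, LinearMap.smul_apply, Module.End.one_apply] at h
    exact eq_sub_of_add_eq' h
  have htt : ∀ i w, M.t i (M.t i w) = (k i + (k i)⁻¹) • M.t i w - w := fun i w => by
    have h2 := hsv i (M.t i w)
    rw [hst i w] at h2
    linear_combination (norm := module) h2
  have hXinvX : ∀ w, M.Xinv (M.X w) = w := fun w => by
    simp only [HqMod.X, HqMod.Xinv, Module.End.mul_apply, hst]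
  have hμ0 : μ ≠ 0 := by
    obtain ⟨w, hw⟩ := hμ.exists_hasEigenvector
    intro h
    have h1 : M.X w = 0 := by rw [hw.apply_eq_smul, h, zero_smul]
    have h2 := hXinvX w
    rw [h1, map_zero] at h2
    exact hw.2 h2.symm
  have hXveq : M.X v = μ • v := Module.End.mem_eigenspace_iff.mp hv
  have hXv : M.t 3 (M.t 0 v) = μ • v := by
    simpa [HqMod.X, Module.End.mul_apply] using hXveq
  constructor
  · intro hμ2
    have hG0 : M.G0 v =
        M.t 0 v - M.t 3 (M.t 0 ((k 3 + (k 3)⁻¹) • v - M.t 3 v)) := by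
      show (M.t 0 - M.t 3 * M.t 0 * M.s 3) v = _
      simp only [LinearMap.sub_apply, Module.End.mul_apply, hsv 3 v]
    rw [hG0]
    exact keyLemma (M.t 0) (M.t 3) (k 0 + (k 0)⁻¹) (k 3 + (k 3)⁻¹) μ
      (htt 0) (htt 3) hμ0 hμ2 v hXv
  · intro hq2
    have hν0 : q⁻¹ * μ⁻¹ ≠ 0 := mul_ne_zero (inv_ne_zero hq) (inv_ne_zero hμ0)
    have hν2 : (q⁻¹ * μ⁻¹) ^ 2 ≠ 1 := by
      intro h
      apply hq2
      have h3 : (q ^ 2 * μ ^ 2) * (q⁻¹ * μ⁻¹) ^ 2 = 1 := by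
        field_simp
      rw [h, mul_one] at h3
      exact h3
    have hXinvv : M.s 0 (M.s 3 v) = μ⁻¹ • v := by
      have h1 : M.X (μ⁻¹ • v) = v := by
        rw [map_smul, hXveq, smul_smul, inv_mul_cancel₀ hμ0, one_smul]
      have h2 := hXinvX (μ⁻¹ • v)
      rw [h1] at h2
      simpa [HqMod.Xinv, Module.End.mul_apply] using h2
    have hZv : M.t 1 (M.t 2 v) = (q⁻¹ * μ⁻¹) • v := by
      have hp := DFunLike.congr_fun M.prodEq (M.s 3 v)
      simp only [Module.End.mul_apply, LinearMap.smul_apply, Module.End.one_apply] at hp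
      rw [hts 3] at hp
      have h4 : M.s 0 (M.t 0 (M.t 1 (M.t 2 v))) = M.s 0 (q⁻¹ • M.s 3 v) := by rw [hp]
      rw [hst 0, map_smul, hXinvv, smul_smul] at h4
      exact h4
    have hG2 : M.G2 v =
        M.t 2 v - M.t 1 (M.t 2 ((k 1 + (k 1)⁻¹) • v - M.t 1 v)) := by
      show (M.t 2 - M.t 1 * M.t 2 * M.s 1) v = _
      simp only [LinearMap.sub_apply, Module.End.mul_apply, hsv 1 v]
    rw [hG2]
    exact keyLemma (M.t 2) (M.t 1) (k 2 + (k 2)⁻¹) (k 1 + (k 1)⁻¹) (q⁻¹ * μ⁻¹)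
      (htt 2) (htt 1) hν0 hν2 v hZv
end
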